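/- arXiv:2210.08156 — 11 statements merged into one kernel-verified Lean document; each statement's English description precedes it below -/
import Mathlib

section
/- Let X be a real Banach space, P : X → X a bounded linear map, and Q = id − P. Suppose ‖P‖ ≤ c_P and ‖Q‖ ≤ c_Q with c_P, c_Q > 0. Fix real numbers 0 ≤ s₁ < s₂ and set ϱ₀ = min{ (s₂ − s₁)/(2(c_Q + c_P s₁)(1 + s₁)), 1/(2 c_P (1 + s₁)) }. If u₁, u₂ ∈ X satisfy ‖u₁‖ = ‖u₂‖ = 1, ‖Q u₁‖ ≤ s₁ ‖P u₁‖, and ‖u₂ − u₁‖ ≤ ϱ₀, then ‖Q u₂‖ ≤ s₂ ‖P u₂‖. -/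
/-!
Since `u = P u + Q u`, a unit vector of the cone `‖Q u‖ ≤ s₁ ‖P u‖` has `‖P u‖ ≥ 1 / (1 + s₁)`.
Moving from `u₁` to `u₂` changes `‖P u‖` and `‖Q u‖` by at most `c_P ϱ₀` and `c_Q ϱ₀`. The second
term of `ϱ₀` keeps `‖P u₂‖ ≥ 1 / (2 (1 + s₁))`, and the first makes the error
`(c_Q + c_P s₁) ϱ₀` in `‖Q u₂‖ ≤ s₁ ‖P u₂‖ + (c_Q + c_P s₁) ϱ₀` at most `(s₂ - s₁) ‖P u₂‖`.
-/

section

variable {𝕜 E F : Type*} [NontriviallyNormedField 𝕜]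
  [SeminormedAddCommGroup E] [NormedSpace 𝕜 E] [SeminormedAddCommGroup F] [NormedSpace 𝕜 F]

theorem ContinuousLinearMap.norm_apply_sub_norm_apply_le (f : E →L[𝕜] F) {c : ℝ}
    (hf : ‖f‖ ≤ c) (x y : E) : ‖f x‖ - ‖f y‖ ≤ c * ‖x - y‖ :=
  calc ‖f x‖ - ‖f y‖ ≤ ‖f x - f y‖ := norm_sub_norm_le _ _
    _ = ‖f (x - y)‖ := by rw [map_sub]
    _ ≤ ‖f‖ * ‖x - y‖ := f.le_opNorm _
    _ ≤ c * ‖x - y‖ := by gcongr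

theorem norm_le_one_add_mul_norm_of_norm_le_mul {P Q : E →L[𝕜] E}
    (hQ : Q = ContinuousLinearMap.id 𝕜 E - P) {s : ℝ} {u : E} (hu : ‖Q u‖ ≤ s * ‖P u‖) :
    ‖u‖ ≤ (1 + s) * ‖P u‖ :=
  calc ‖u‖ = ‖P u + Q u‖ := by simp [hQ]
    _ ≤ ‖P u‖ + ‖Q u‖ := norm_add_le _ _
    _ ≤ (1 + s) * ‖P u‖ := by linarith

end

theorem stmt0_general (X : Type*) [NormedAddCommGroup X] [NormedSpace ℝ X]
    (P Q : X →L[ℝ] X) (hQ : Q = ContinuousLinearMap.id ℝ X - P)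
    (cP cQ : ℝ)
    (hPn : ‖P‖ ≤ cP) (hQn : ‖Q‖ ≤ cQ)
    (s₁ s₂ : ℝ) (hs₁ : 0 ≤ s₁) (hs : s₁ < s₂)
    (ϱ₀ : ℝ)
    (hϱ : ϱ₀ = min ((s₂ - s₁) / (2 * (cQ + cP * s₁) * (1 + s₁))) (1 / (2 * cP * (1 + s₁))))
    (u₁ u₂ : X) (hu₁ : ‖u₁‖ = 1)
    (hcone : ‖Q u₁‖ ≤ s₁ * ‖P u₁‖)
    (hclose : ‖u₂ - u₁‖ ≤ ϱ₀) :
    ‖Q u₂‖ ≤ s₂ * ‖P u₂‖ := by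
  have hcP : 0 ≤ cP := (norm_nonneg P).trans hPn
  have hcQ : 0 ≤ cQ := (norm_nonneg Q).trans hQn
  have hϱ₁ : ϱ₀ * (2 * (cQ + cP * s₁) * (1 + s₁)) ≤ s₂ - s₁ :=
    mul_le_of_le_div₀ (by linarith) (by positivity) (hϱ ▸ min_le_left _ _)
  have hϱ₂ : ϱ₀ * (2 * cP * (1 + s₁)) ≤ 1 :=
    mul_le_of_le_div₀ zero_le_one (by positivity) (hϱ ▸ min_le_right _ _)
  have hPu₁ : 1 ≤ (1 + s₁) * ‖P u₁‖ := hu₁ ▸ norm_le_one_add_mul_norm_of_norm_le_mul hQ hcone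
  have hPlip : ‖P u₁‖ - cP * ϱ₀ ≤ ‖P u₂‖ := by
    have := P.norm_apply_sub_norm_apply_le hPn u₁ u₂
    rw [norm_sub_rev] at this
    linarith [mul_le_mul_of_nonneg_left hclose hcP]
  have hQlip : ‖Q u₂‖ ≤ ‖Q u₁‖ + cQ * ϱ₀ := by
    have := Q.norm_apply_sub_norm_apply_le hQn u₂ u₁
    linarith [mul_le_mul_of_nonneg_left hclose hcQ]
  have hPu₂ : 1 ≤ 2 * (1 + s₁) * ‖P u₂‖ := by nlinarith
  have hQu₂ : ‖Q u₂‖ ≤ s₁ * ‖P u₂‖ + (cQ + cP * s₁) * ϱ₀ := by nlinarith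
  have herr : (cQ + cP * s₁) * ϱ₀ ≤ (s₂ - s₁) * ‖P u₂‖ := by nlinarith
  linarith

/-- Persistence of cone membership under small perturbations on the unit sphere. -/
theorem stmt0 (X : Type*) [NormedAddCommGroup X] [NormedSpace ℝ X] [CompleteSpace X]
    (P Q : X →L[ℝ] X) (hQ : Q = ContinuousLinearMap.id ℝ X - P)
    (cP cQ : ℝ) (hcP : 0 < cP) (hcQ : 0 < cQ)
    (hPn : ‖P‖ ≤ cP) (hQn : ‖Q‖ ≤ cQ)
    (s₁ s₂ : ℝ) (hs₁ : 0 ≤ s₁) (hs : s₁ < s₂)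
    (ϱ₀ : ℝ)
    (hϱ : ϱ₀ = min ((s₂ - s₁) / (2 * (cQ + cP * s₁) * (1 + s₁))) (1 / (2 * cP * (1 + s₁))))
    (u₁ u₂ : X) (hu₁ : ‖u₁‖ = 1) (hu₂ : ‖u₂‖ = 1)
    (hcone : ‖Q u₁‖ ≤ s₁ * ‖P u₁‖)
    (hclose : ‖u₂ - u₁‖ ≤ ϱ₀) :
    ‖Q u₂‖ ≤ s₂ * ‖P u₂‖ :=
  stmt0_general X P Q hQ cP cQ hPn hQn s₁ s₂ hs₁ hs ϱ₀ hϱ u₁ u₂ hu₁ hcone hclose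
end

section
/- Let X be a real Banach space and T : X → X a bounded linear operator with ‖T‖ ≤ ζ, where ζ > 0. Let 0 < δ < 1, 0 < λ₁ < 1, t ∈ [1/2, 1], and set λ₀ = 2δ + (δζ + λ₁^{1/2})/(1 − δ). If u = v + w with v, w ∈ X, ‖v‖ ≤ δ‖w‖, and ‖T w‖ ≤ λ₁^t ‖w‖, then ‖T u‖ ≤ (λ₀ − 2δ)‖u‖. -/
/-!
Since `‖v‖ ≤ δ‖w‖`, the reverse triangle inequality gives `(1 - δ)‖w‖ ≤ ‖u‖`, while
`‖T u‖ ≤ ‖T v‖ + ‖T w‖ ≤ (δζ + λ₁^t)‖w‖ ≤ (δζ + λ₁^{1/2})‖w‖`. Dividing by `1 - δ` gives the claim.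
-/

section ConeContraction

variable {𝕜 E F : Type*} [NontriviallyNormedField 𝕜]
  [SeminormedAddCommGroup E] [NormedSpace 𝕜 E] [SeminormedAddCommGroup F] [NormedSpace 𝕜 F]

theorem one_sub_mul_norm_le_norm_add {v w : E} {δ : ℝ} (hv : ‖v‖ ≤ δ * ‖w‖) :
    (1 - δ) * ‖w‖ ≤ ‖v + w‖ := by
  have := norm_sub_le_norm_add w v
  rw [add_comm w v] at this
  linarith

theorem ContinuousLinearMap.norm_apply_add_le_of_norm_le_mul {T : E →L[𝕜] F} {ζ δ μ : ℝ}
    (hT : ‖T‖ ≤ ζ) {v w : E} (hv : ‖v‖ ≤ δ * ‖w‖) (hw : ‖T w‖ ≤ μ * ‖w‖) :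
    ‖T (v + w)‖ ≤ (δ * ζ + μ) * ‖w‖ := by
  have hTv : ‖T v‖ ≤ ζ * (δ * ‖w‖) :=
    (T.le_of_opNorm_le hT v).trans
      (mul_le_mul_of_nonneg_left hv ((norm_nonneg T).trans hT))
  calc ‖T (v + w)‖ ≤ ‖T v‖ + ‖T w‖ := by rw [map_add]; exact norm_add_le _ _
    _ ≤ (δ * ζ + μ) * ‖w‖ := by linarith

theorem ContinuousLinearMap.norm_apply_add_le_div_one_sub {T : E →L[𝕜] F} {ζ δ μ : ℝ}
    (hT : ‖T‖ ≤ ζ) (hδ : 0 ≤ δ) (hδ1 : δ < 1) (hμ : 0 ≤ μ) {v w : E}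
    (hv : ‖v‖ ≤ δ * ‖w‖) (hw : ‖T w‖ ≤ μ * ‖w‖) :
    ‖T (v + w)‖ ≤ (δ * ζ + μ) / (1 - δ) * ‖v + w‖ := by
  have hζ : 0 ≤ ζ := (norm_nonneg T).trans hT
  have hc : 0 ≤ (δ * ζ + μ) / (1 - δ) := div_nonneg (by positivity) (by linarith)
  calc ‖T (v + w)‖ ≤ (δ * ζ + μ) * ‖w‖ := T.norm_apply_add_le_of_norm_le_mul hT hv hw
    _ = (δ * ζ + μ) / (1 - δ) * ((1 - δ) * ‖w‖) := by field_simp [(by linarith : 1 - δ ≠ 0)]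
    _ ≤ (δ * ζ + μ) / (1 - δ) * ‖v + w‖ :=
      mul_le_mul_of_nonneg_left (one_sub_mul_norm_le_norm_add hv) hc

end ConeContraction

theorem stmt1_general (X : Type*) [NormedAddCommGroup X] [NormedSpace ℝ X]
    (T : X →L[ℝ] X) (ζ : ℝ) (hT : ‖T‖ ≤ ζ)
    (δ : ℝ) (hδ : 0 < δ) (hδ1 : δ < 1)
    (lam1 : ℝ) (hlam1 : 0 < lam1) (hlam1' : lam1 < 1)
    (t : ℝ) (ht : 1 / 2 ≤ t)
    (lam0 : ℝ) (hlam0 : lam0 = 2 * δ + (δ * ζ + lam1 ^ ((1 : ℝ) / 2)) / (1 - δ))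
    (u v w : X) (huvw : u = v + w)
    (hv : ‖v‖ ≤ δ * ‖w‖) (hw : ‖T w‖ ≤ lam1 ^ t * ‖w‖) :
    ‖T u‖ ≤ (lam0 - 2 * δ) * ‖u‖ := by
  have hpow : lam1 ^ t ≤ lam1 ^ ((1 : ℝ) / 2) :=
    Real.rpow_le_rpow_of_exponent_ge hlam1 hlam1'.le ht
  have hw' : ‖T w‖ ≤ lam1 ^ ((1 : ℝ) / 2) * ‖w‖ :=
    hw.trans (mul_le_mul_of_nonneg_right hpow (norm_nonneg w))
  have hlam0' : lam0 - 2 * δ = (δ * ζ + lam1 ^ ((1 : ℝ) / 2)) / (1 - δ) := by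
    rw [hlam0]; ring
  rw [hlam0', huvw]
  exact T.norm_apply_add_le_div_one_sub hT hδ.le hδ1 (Real.rpow_nonneg hlam1.le _) hv hw'

/-- Contraction estimate outside the largest cone:
`λ₁` is `lam1`, `λ₀` is `lam0`. -/
theorem stmt1 (X : Type*) [NormedAddCommGroup X] [NormedSpace ℝ X] [CompleteSpace X]
    (T : X →L[ℝ] X) (ζ : ℝ) (hζ : 0 < ζ) (hT : ‖T‖ ≤ ζ)
    (δ : ℝ) (hδ : 0 < δ) (hδ1 : δ < 1)
    (lam1 : ℝ) (hlam1 : 0 < lam1) (hlam1' : lam1 < 1)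
    (t : ℝ) (ht : 1 / 2 ≤ t) (ht' : t ≤ 1)
    (lam0 : ℝ) (hlam0 : lam0 = 2 * δ + (δ * ζ + lam1 ^ ((1 : ℝ) / 2)) / (1 - δ))
    (u v w : X) (huvw : u = v + w)
    (hv : ‖v‖ ≤ δ * ‖w‖) (hw : ‖T w‖ ≤ lam1 ^ t * ‖w‖) :
    ‖T u‖ ≤ (lam0 - 2 * δ) * ‖u‖ :=
  stmt1_general X T ζ hT δ hδ hδ1 lam1 hlam1 hlam1' t ht lam0 hlam0 u v w huvw hv hw
end

section
/- Let X be a real Banach space, Z a compact metric space, and z ↦ P_z a family of bounded linear projections on X (P_z ∘ P_z = P_z), continuous from Z into the space of bounded operators with the operator norm, each P_z having finite-dimensional range. Assume that range(P_{z₁}) ∩ ker(P_{z₂}) = {0} for all z₁, z₂ ∈ Z. Then there exists δ₀ > 0 such that for every 0 ≤ s ≤ δ₀ and every u ∈ X the following holds: if ‖(id − P_{z₁})u‖ ≤ s‖P_{z₁}u‖ for some z₁ ∈ Z and ‖P_{z₂}u‖ ≤ s‖(id − P_{z₂})u‖ for some z₂ ∈ Z, then u = 0. -/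
/-!
Ranges of the `P z` are transverse to all kernels, and the unit vectors of all ranges form a
compact set (finite-dimensionality of each range plus norm-continuity of `P`), so there is a
uniform `c > 0` with `c ‖v‖ ≤ ‖P z₂ v‖` for all `v ∈ range (P z₁)`. A vector in both cone
neighbourhoods has `P z₁ u` close to `u` and `P z₂ u` small; for `s` small against `c` this
forces `P z₁ u = 0`, and then `u = 0`.
-/

open Filter Topology

section

variable {X Z : Type*} [NormedAddCommGroup X] [NormedSpace ℝ X] [MetricSpace Z]

-- Fixed points of `P z` stand in for its range: the two agree for projections, and fixed points
-- make closedness immediate.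
def unitRangeBundle (P : Z → X →L[ℝ] X) : Set (Z × X) :=
  {p | P p.1 p.2 = p.2 ∧ ‖p.2‖ = 1}

theorem isClosed_unitRangeBundle {P : Z → X →L[ℝ] X} (hP : Continuous P) :
    IsClosed (unitRangeBundle P) :=
  (isClosed_eq ((hP.comp continuous_fst).clm_apply continuous_snd) continuous_snd).inter
    (isClosed_eq continuous_snd.norm continuous_const)

theorem isCompact_unitRangeBundle [CompactSpace Z] {P : Z → X →L[ℝ] X} (hP : Continuous P)
    (hfin : ∀ z, FiniteDimensional ℝ (LinearMap.range (P z : X →ₗ[ℝ] X))) :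
    IsCompact (unitRangeBundle P) := by
  refine IsSeqCompact.isCompact fun x hx => ?_
  obtain ⟨a, -, φ, hφ, hza⟩ := isCompact_univ.tendsto_subseq fun n => Set.mem_univ (x n).1
  have := hfin a
  let K : Set X := Subtype.val '' Metric.closedBall (0 : LinearMap.range (P a : X →ₗ[ℝ] X)) ‖P a‖
  have hK : IsCompact K := (isCompact_closedBall _ _).image continuous_subtype_val
  have hPa_mem : ∀ n, P a (x (φ n)).2 ∈ K := fun n =>
    ⟨⟨_, LinearMap.mem_range_self _ _⟩, by
      simpa [(hx (φ n)).2] using (P a).le_opNorm (x (φ n)).2, rfl⟩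
  obtain ⟨l, -, ψ, hψ, hl⟩ := hK.tendsto_subseq hPa_mem
  have hz : Tendsto (fun n => (x (φ (ψ n))).1) atTop (𝓝 a) := hza.comp hψ.tendsto_atTop
  -- `v - P a v = (P z - P a) v` for `(z, v)` in the bundle, and `P z → P a`
  have hdiff : Tendsto (fun n => (x (φ (ψ n))).2 - P a (x (φ (ψ n))).2) atTop (𝓝 0) := by
    refine squeeze_zero_norm (fun n => ?_)
      (tendsto_iff_norm_sub_tendsto_zero.mp ((hP.tendsto a).comp hz))
    obtain ⟨hfix, hnorm⟩ := hx (φ (ψ n))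
    calc ‖(x (φ (ψ n))).2 - P a (x (φ (ψ n))).2‖
        = ‖(P (x (φ (ψ n))).1 - P a) (x (φ (ψ n))).2‖ := by rw [sub_apply, hfix]
      _ ≤ ‖P (x (φ (ψ n))).1 - P a‖ := by
          simpa [hnorm] using (P (x (φ (ψ n))).1 - P a).le_opNorm (x (φ (ψ n))).2
  have hv : Tendsto (fun n => (x (φ (ψ n))).2) atTop (𝓝 l) := by
    simpa using hdiff.add hl
  have hlim : Tendsto (x ∘ φ ∘ ψ) atTop (𝓝 (a, l)) := hz.prodMk_nhds hv
  exact ⟨(a, l), (isClosed_unitRangeBundle hP).mem_of_tendsto hlim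
    (Eventually.of_forall fun n => hx _), φ ∘ ψ, hφ.comp hψ, hlim⟩

theorem exists_pos_mul_norm_le_norm_apply_of_fixed [CompactSpace Z] {P : Z → X →L[ℝ] X}
    (hP : Continuous P) (hfin : ∀ z, FiniteDimensional ℝ (LinearMap.range (P z : X →ₗ[ℝ] X)))
    (htrans : ∀ z₁ z₂,
      LinearMap.range (P z₁ : X →ₗ[ℝ] X) ⊓ LinearMap.ker (P z₂ : X →ₗ[ℝ] X) = ⊥) :
    ∃ c > (0 : ℝ), ∀ z₁ z₂ (v : X), P z₁ v = v → c * ‖v‖ ≤ ‖P z₂ v‖ := by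
  have hpos : ∀ q ∈ unitRangeBundle P ×ˢ (Set.univ : Set Z), 0 < ‖P q.2 q.1.2‖ := by
    rintro ⟨⟨z₁, v⟩, z₂⟩ ⟨⟨hfix, hnorm⟩, -⟩
    refine norm_pos_iff.mpr fun hker => ?_
    have hv : v ∈ LinearMap.range (P z₁ : X →ₗ[ℝ] X) ⊓ LinearMap.ker (P z₂ : X →ₗ[ℝ] X) :=
      ⟨⟨v, hfix⟩, hker⟩
    rw [htrans, Submodule.mem_bot] at hv
    simp [hv] at hnorm
  have hcont : Continuous fun q : (Z × X) × Z => ‖P q.2 q.1.2‖ :=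
    ((hP.comp continuous_snd).clm_apply (continuous_snd.comp continuous_fst)).norm
  obtain ⟨c, hc, hcle⟩ :=
    ((isCompact_unitRangeBundle hP hfin).prod isCompact_univ).exists_forall_le'
      hcont.continuousOn hpos
  refine ⟨c, hc, fun z₁ z₂ v hfix => ?_⟩
  rcases eq_or_ne v 0 with rfl | hv0
  · simp
  have hvpos : 0 < ‖v‖ := norm_pos_iff.mpr hv0
  have hunit : ((z₁, ‖v‖⁻¹ • v), z₂) ∈ unitRangeBundle P ×ˢ (Set.univ : Set Z) :=
    ⟨⟨by simp [hfix], by simp [norm_smul, hvpos.ne']⟩, trivial⟩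
  have := hcle _ hunit
  rwa [map_smul, norm_smul, norm_inv, norm_norm, ← div_eq_inv_mul, le_div_iff₀ hvpos] at this

theorem eq_zero_of_cone_of_coCone {P₁ P₂ : X →L[ℝ] X} {c M s : ℝ} {u : X}
    (hc : c * ‖P₁ u‖ ≤ ‖P₂ (P₁ u)‖) (hM : ‖P₂‖ ≤ M) (hs0 : 0 ≤ s) (hs1 : s ≤ 1)
    (hsc : s * (3 * M + 2) < c)
    (h₁ : ‖u - P₁ u‖ ≤ s * ‖P₁ u‖) (h₂ : ‖P₂ u‖ ≤ s * ‖u - P₂ u‖) : u = 0 := by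
  have hM0 : 0 ≤ M := (norm_nonneg _).trans hM
  have hu : ‖u‖ ≤ 2 * ‖P₁ u‖ := by
    have := norm_sub_norm_le u (P₁ u)
    nlinarith [norm_nonneg (P₁ u)]
  have hP₂u : ‖P₂ u‖ ≤ s * (1 + M) * (2 * ‖P₁ u‖) := by
    have hPu : ‖P₂ u‖ ≤ M * ‖u‖ := P₂.le_of_opNorm_le hM u
    calc ‖P₂ u‖ ≤ s * ‖u - P₂ u‖ := h₂
      _ ≤ s * ((1 + M) * ‖u‖) := by
          gcongr
          linarith [norm_sub_le u (P₂ u)]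
      _ ≤ s * (1 + M) * (2 * ‖P₁ u‖) := by rw [mul_assoc]; gcongr
  have hP₂diff : ‖P₂ (P₁ u) - P₂ u‖ ≤ M * (s * ‖P₁ u‖) := by
    calc ‖P₂ (P₁ u) - P₂ u‖ = ‖P₂ (u - P₁ u)‖ := by
          rw [← map_sub, ← norm_neg, ← map_neg, neg_sub]
      _ ≤ M * ‖u - P₁ u‖ := P₂.le_of_opNorm_le hM _
      _ ≤ M * (s * ‖P₁ u‖) := by gcongr
  have hP₁u : P₁ u = 0 := by
    have := norm_sub_norm_le (P₂ (P₁ u)) (P₂ u)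
    exact norm_eq_zero.mp (by nlinarith [norm_nonneg (P₁ u)])
  simpa [hP₁u] using h₁

end

theorem stmt2_general (X : Type*) [NormedAddCommGroup X] [NormedSpace ℝ X]
    (Z : Type*) [MetricSpace Z] [CompactSpace Z]
    (P : Z → X →L[ℝ] X) (hP_cont : Continuous P)
    (hproj : ∀ z, (P z).comp (P z) = P z)
    (hfin : ∀ z, FiniteDimensional ℝ (LinearMap.range (P z : X →ₗ[ℝ] X)))
    (htrans : ∀ z₁ z₂, LinearMap.range (P z₁ : X →ₗ[ℝ] X) ⊓ LinearMap.ker (P z₂ : X →ₗ[ℝ] X) = ⊥) :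
    ∃ δ₀ > (0 : ℝ), ∀ s : ℝ, 0 ≤ s → s ≤ δ₀ → ∀ u : X,
      (∃ z₁, ‖u - P z₁ u‖ ≤ s * ‖P z₁ u‖) →
      (∃ z₂, ‖P z₂ u‖ ≤ s * ‖u - P z₂ u‖) → u = 0 := by
  obtain ⟨c, hc, hkey⟩ := exists_pos_mul_norm_le_norm_apply_of_fixed hP_cont hfin htrans
  obtain ⟨M, hM⟩ := isCompact_univ.exists_bound_of_continuousOn hP_cont.continuousOn
  refine ⟨min 1 (c / (2 * (3 * |M| + 2))), by positivity,
    fun s hs0 hsδ u ⟨z₁, h₁⟩ ⟨z₂, h₂⟩ => ?_⟩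
  have hsc : s * (3 * |M| + 2) < c := by
    have := hsδ.trans (min_le_right _ _)
    rw [le_div_iff₀ (by positivity)] at this
    linarith
  have hfix : P z₁ (P z₁ u) = P z₁ u := congrArg (fun T : X →L[ℝ] X => T u) (hproj z₁)
  exact eq_zero_of_cone_of_coCone (hkey z₁ z₂ _ hfix) ((hM z₂ trivial).trans (le_abs_self M))
    hs0 (hsδ.trans (min_le_left _ _)) hsc h₁ h₂

/-- The cone neighborhood 𝒞(s) and the complementary cone neighborhood 𝒟(s) of a
continuous family of finite-rank projections with transverse ranges/kernels
intersect only in 0, for all sufficiently small `s`. -/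
theorem stmt2 (X : Type*) [NormedAddCommGroup X] [NormedSpace ℝ X] [CompleteSpace X]
    (Z : Type*) [MetricSpace Z] [CompactSpace Z]
    (P : Z → X →L[ℝ] X) (hP_cont : Continuous P)
    (hproj : ∀ z, (P z).comp (P z) = P z)
    (hfin : ∀ z, FiniteDimensional ℝ (LinearMap.range (P z : X →ₗ[ℝ] X)))
    (htrans : ∀ z₁ z₂, LinearMap.range (P z₁ : X →ₗ[ℝ] X) ⊓ LinearMap.ker (P z₂ : X →ₗ[ℝ] X) = ⊥) :
    ∃ δ₀ > (0 : ℝ), ∀ s : ℝ, 0 ≤ s → s ≤ δ₀ → ∀ u : X,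
      (∃ z₁, ‖u - P z₁ u‖ ≤ s * ‖P z₁ u‖) →
      (∃ z₂, ‖P z₂ u‖ ≤ s * ‖u - P z₂ u‖) → u = 0 :=
  stmt2_general X Z P hP_cont hproj hfin htrans
end

section
/- Let X be a real Banach space, Z a nonempty compact metric space, k a positive integer, and z ↦ P_z a norm-continuous family of bounded linear projections on X, each with range of dimension exactly k, such that range(P_{z₁}) ∩ ker(P_{z₂}) = {0} for all z₁, z₂ ∈ Z. Then there exists δ₀ > 0 such that for every 0 < s ≤ δ₀ the set 𝒞(s) = {u ∈ X : there exists z ∈ Z with ‖(id − P_z)u‖ ≤ s‖P_z u‖} is a k-cone; explicitly: (i) 𝒞(s) is closed in X; (ii) λ·𝒞(s) = 𝒞(s) for every real λ ≠ 0; (iii) 𝒞(s) contains the k-dimensional subspace range(P_z) for every z ∈ Z; and (iv) for every z₀ ∈ Z the closed subspace ker(P_z₀), which has codimension k in X, satisfies 𝒞(s) ∩ ker(P_{z₀}) = {0}. -/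
/-!
For each pair `(z₁, z₂)`, `P z₂` is injective on the finite-dimensional range of `P z₁`, hence
bounded below there by some `c > 0`. A perturbation estimate makes such a bound locally uniform in
`(z₁, z₂)`, and compactness of `Z × Z` gives one `c` for all pairs. If `u ∈ 𝒞(s)` via `z` and
`P z₀ u = 0`, then `c ‖P z u‖ ≤ ‖P z₀ (P z u - u)‖ ≤ s ‖P z₀‖ ‖P z u‖`, so `P z u = 0`, and then
`u = 0`, as soon as `s · sup ‖P z‖ < c`. Closedness holds because `𝒞(s)` is the projection of a
closed subset of `Z × X` along the compact factor.
-/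

open Filter Topology

section LowerBound

variable {𝕜 E F : Type*} [NontriviallyNormedField 𝕜]
  [NormedAddCommGroup E] [NormedSpace 𝕜 E] [NormedAddCommGroup F] [NormedSpace 𝕜 F]

theorem Submodule.exists_pos_mul_norm_le_of_inf_ker_eq_bot [CompleteSpace 𝕜]
    (V : Submodule 𝕜 E) [FiniteDimensional 𝕜 V] (R : E →L[𝕜] F)
    (hV : V ⊓ LinearMap.ker (R : E →ₗ[𝕜] F) = ⊥) : ∃ c > 0, ∀ v ∈ V, c * ‖v‖ ≤ ‖R v‖ := by
  have hinj : Function.Injective ((R : E →ₗ[𝕜] F) ∘ₗ V.subtype) := by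
    refine (injective_iff_map_eq_zero _).mpr fun v hv => ?_
    have : (v : E) ∈ V ⊓ LinearMap.ker (R : E →ₗ[𝕜] F) := ⟨v.2, hv⟩
    simpa [hV] using this
  obtain ⟨K, -, hK⟩ := (LinearMap.injective_iff_antilipschitz _).mp hinj
  obtain ⟨c, hc, hle⟩ := antilipschitzWith_iff_exists_mul_le_norm.mp ⟨K, hK⟩
  exact ⟨c, hc, fun v hv => hle ⟨v, hv⟩⟩

theorem norm_apply_ge_of_perturbation {Q Q' : E →L[𝕜] E} {R R' : E →L[𝕜] F} {c : ℝ}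
    (hc : 0 ≤ c) (hR : ∀ v ∈ LinearMap.range (Q : E →ₗ[𝕜] E), c * ‖v‖ ≤ ‖R v‖)
    {v : E} (hv : Q' v = v) :
    (c - (c + ‖R‖) * ‖Q' - Q‖ - ‖R' - R‖) * ‖v‖ ≤ ‖R' v‖ := by
  have hQv : ‖v - Q v‖ ≤ ‖Q' - Q‖ * ‖v‖ := by
    simpa [hv] using (Q' - Q).le_opNorm v
  have hR' : ‖R v‖ - ‖R' - R‖ * ‖v‖ ≤ ‖R' v‖ := by
    have := (R' - R).le_opNorm v
    rw [sub_apply] at this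
    linarith [norm_sub_norm_le (R v) (R' v), norm_sub_rev (R' v) (R v)]
  have hRQ : ‖R (Q v)‖ - ‖R‖ * ‖v - Q v‖ ≤ ‖R v‖ := by
    have := R.le_opNorm (v - Q v)
    rw [map_sub] at this
    linarith [norm_sub_norm_le (R (Q v)) (R v), norm_sub_rev (R v) (R (Q v))]
  have hQ : c * (‖v‖ - ‖v - Q v‖) ≤ ‖R (Q v)‖ :=
    (mul_le_mul_of_nonneg_left (by simpa using norm_sub_norm_le v (v - Q v)) hc).trans
      (hR (Q v) ⟨v, rfl⟩)
  nlinarith [mul_le_mul_of_nonneg_left hQv (add_nonneg hc (norm_nonneg R))]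

theorem exists_pos_uniform_mul_norm_le {Y : Type*} [TopologicalSpace Y] [CompactSpace Y]
    {Q : Y → E →L[𝕜] E} {R : Y → E →L[𝕜] F} (hQ : Continuous Q) (hR : Continuous R)
    (hproj : ∀ y, IsIdempotentElem (Q y))
    (hbound : ∀ y, ∃ c > 0, ∀ v ∈ LinearMap.range (Q y : E →ₗ[𝕜] E), c * ‖v‖ ≤ ‖R y v‖) :
    ∃ c > 0, ∀ y, ∀ v ∈ LinearMap.range (Q y : E →ₗ[𝕜] E), c * ‖v‖ ≤ ‖R y v‖ := by
  have hlocal : ∀ y, ∀ᶠ p : ℝ × Y in 𝓝 (0, y),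
      ∀ v ∈ LinearMap.range (Q p.2 : E →ₗ[𝕜] E), p.1 * ‖v‖ ≤ ‖R p.2 v‖ := by
    intro y
    -- the bound `c` at `y` degrades continuously with the distance from `Q y` and `R y`
    obtain ⟨c, hc, hcy⟩ := hbound y
    have hcont : Continuous fun p : ℝ × Y =>
        c - (c + ‖R y‖) * ‖Q p.2 - Q y‖ - ‖R p.2 - R y‖ - p.1 := by fun_prop
    have hpos := hcont.continuousAt (x := (0, y)) |>.eventually (lt_mem_nhds (by simpa using hc))
    filter_upwards [hpos] with p hp v hv
    have hv' : Q p.2 v = v :=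
      LinearMap.IsIdempotentElem.mem_range_iff
        (ContinuousLinearMap.IsIdempotentElem.toLinearMap (hproj p.2)) |>.mp hv
    calc p.1 * ‖v‖ ≤ (c - (c + ‖R y‖) * ‖Q p.2 - Q y‖ - ‖R p.2 - R y‖) * ‖v‖ :=
          mul_le_mul_of_nonneg_right (by linarith) (norm_nonneg v)
      _ ≤ ‖R p.2 v‖ := norm_apply_ge_of_perturbation hc.le hcy hv'
  have huniform := isCompact_univ.eventually_forall_of_forall_eventually
    (P := fun c y => ∀ v ∈ LinearMap.range (Q y : E →ₗ[𝕜] E), c * ‖v‖ ≤ ‖R y v‖)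
    fun y _ => hlocal y
  obtain ⟨c, hc, hcpos⟩ :=
    ((huniform.filter_mono nhdsWithin_le_nhds).and (self_mem_nhdsWithin (s := Set.Ioi 0))).exists
  exact ⟨c, hcpos, fun y => hc y trivial⟩

end LowerBound

section ProjectionCone

variable {𝕜 E Z : Type*} [NontriviallyNormedField 𝕜] [NormedAddCommGroup E] [NormedSpace 𝕜 E]

def projectionCone (P : Z → E →L[𝕜] E) (s : ℝ) : Set E :=
  {u | ∃ z, ‖u - P z u‖ ≤ s * ‖P z u‖}

variable {P : Z → E →L[𝕜] E} {s : ℝ}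

theorem isClosed_projectionCone [TopologicalSpace Z] [CompactSpace Z] (hP : Continuous P) :
    IsClosed (projectionCone P s) := by
  have hPu : Continuous fun p : Z × E => P p.1 p.2 :=
    isBoundedBilinearMap_apply.continuous.comp ((hP.comp continuous_fst).prodMk continuous_snd)
  have hgraph : IsClosed {p : Z × E | ‖p.2 - P p.1 p.2‖ ≤ s * ‖P p.1 p.2‖} :=
    isClosed_le (continuous_snd.sub hPu).norm (continuous_const.mul hPu.norm)
  convert isClosedMap_snd_of_compactSpace _ hgraph using 1
  ext u
  simp [projectionCone]

theorem smul_mem_projectionCone {u : E} (a : 𝕜) (hu : u ∈ projectionCone P s) :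
    a • u ∈ projectionCone P s := by
  obtain ⟨z, hz⟩ := hu
  refine ⟨z, ?_⟩
  rw [map_smul, ← smul_sub, norm_smul, norm_smul, mul_left_comm]
  exact mul_le_mul_of_nonneg_left hz (norm_nonneg a)

theorem image_smul_projectionCone {a : 𝕜} (ha : a ≠ 0) :
    (fun u : E => a • u) '' projectionCone P s = projectionCone P s := by
  refine Set.Subset.antisymm ?_ fun u hu => ⟨a⁻¹ • u, smul_mem_projectionCone _ hu, smul_inv_smul₀ ha u⟩
  rintro _ ⟨u, hu, rfl⟩
  exact smul_mem_projectionCone a hu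

theorem range_subset_projectionCone (hs : 0 ≤ s) {z : Z} (hz : IsIdempotentElem (P z)) :
    (LinearMap.range (P z : E →ₗ[𝕜] E) : Set E) ⊆ projectionCone P s := by
  intro u hu
  refine ⟨z, ?_⟩
  have hfix : P z u = u :=
    LinearMap.IsIdempotentElem.mem_range_iff (ContinuousLinearMap.IsIdempotentElem.toLinearMap hz)
      |>.mp hu
  rw [hfix, sub_self, norm_zero]
  positivity

theorem projectionCone_inter_ker [Nonempty Z] {z₀ : Z} {c : ℝ}
    (hc : ∀ z, ∀ v ∈ LinearMap.range (P z : E →ₗ[𝕜] E), c * ‖v‖ ≤ ‖P z₀ v‖)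
    (hs : s * ‖P z₀‖ < c) :
    projectionCone P s ∩ (LinearMap.ker (P z₀ : E →ₗ[𝕜] E) : Set E) = {0} := by
  refine Set.eq_singleton_iff_unique_mem.mpr ⟨⟨⟨Classical.arbitrary Z, by simp⟩, zero_mem _⟩, ?_⟩
  rintro u ⟨⟨z, hz⟩, hker : P z₀ u = 0⟩
  have hPz : P z u = 0 := by
    have hlow := hc z (P z u) ⟨u, rfl⟩
    have hup : ‖P z₀ (P z u)‖ ≤ ‖P z₀‖ * (s * ‖P z u‖) := by
      have := (P z₀).le_opNorm (u - P z u)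
      rw [map_sub, hker, zero_sub, norm_neg] at this
      exact this.trans (mul_le_mul_of_nonneg_left hz (norm_nonneg _))
    exact norm_eq_zero.mp (by nlinarith [norm_nonneg (P z u), norm_nonneg (P z₀)])
  simpa [hPz] using hz

end ProjectionCone

theorem stmt3_general (X : Type*) [NormedAddCommGroup X] [NormedSpace ℝ X]
    (Z : Type*) [MetricSpace Z] [CompactSpace Z] [Nonempty Z]
    (k : ℕ)
    (P : Z → X →L[ℝ] X) (hP_cont : Continuous P)
    (hproj : ∀ z, (P z).comp (P z) = P z)
    (hfin : ∀ z, FiniteDimensional ℝ (LinearMap.range (P z : X →ₗ[ℝ] X)))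
    (hdim : ∀ z, Module.finrank ℝ (LinearMap.range (P z : X →ₗ[ℝ] X)) = k)
    (htrans : ∀ z₁ z₂, LinearMap.range (P z₁ : X →ₗ[ℝ] X) ⊓ LinearMap.ker (P z₂ : X →ₗ[ℝ] X) = ⊥) :
    ∃ δ₀ > (0 : ℝ), ∀ s : ℝ, 0 < s → s ≤ δ₀ →
      IsClosed {u : X | ∃ z, ‖u - P z u‖ ≤ s * ‖P z u‖} ∧
      (∀ lam : ℝ, lam ≠ 0 →
        (fun u : X => lam • u) '' {u : X | ∃ z, ‖u - P z u‖ ≤ s * ‖P z u‖}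
          = {u : X | ∃ z, ‖u - P z u‖ ≤ s * ‖P z u‖}) ∧
      (∀ z, (LinearMap.range (P z : X →ₗ[ℝ] X) : Set X) ⊆ {u : X | ∃ z', ‖u - P z' u‖ ≤ s * ‖P z' u‖}) ∧
      ∀ z₀, {u : X | ∃ z, ‖u - P z u‖ ≤ s * ‖P z u‖} ∩ (LinearMap.ker (P z₀ : X →ₗ[ℝ] X) : Set X) = {0} ∧
        Module.finrank ℝ (X ⧸ LinearMap.ker (P z₀ : X →ₗ[ℝ] X)) = k := by
  obtain ⟨c, hc, hbound⟩ := exists_pos_uniform_mul_norm_le (Q := fun p : Z × Z => P p.1)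
    (R := fun p => P p.2) (by fun_prop) (by fun_prop) (fun p => hproj p.1) fun p =>
      haveI := hfin p.1
      (LinearMap.range _).exists_pos_mul_norm_le_of_inf_ker_eq_bot _ (htrans p.1 p.2)
  obtain ⟨M, hM, hPM⟩ := (isCompact_range hP_cont).isBounded.exists_pos_norm_le
  refine ⟨c / (2 * M), by positivity, fun s hs hsδ => ⟨isClosed_projectionCone hP_cont,
    fun lam hlam => image_smul_projectionCone hlam,
    fun z => range_subset_projectionCone hs.le (hproj z), fun z₀ => ⟨?_, ?_⟩⟩⟩
  · have hsM : s * ‖P z₀‖ < c := by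
      have := (le_div_iff₀ (by positivity)).mp hsδ
      nlinarith [hPM _ ⟨z₀, rfl⟩]
    exact projectionCone_inter_ker (fun z => hbound (z, z₀)) hsM
  · exact (LinearMap.quotKerEquivRange _).finrank_eq.trans (hdim z₀)

/-- For sufficiently small `s`, the set 𝒞(s) = ⋃_z {u : ‖(id−P_z)u‖ ≤ s‖P_z u‖}
is a k-cone: it is closed, scaling invariant, contains the k-dimensional ranges,
and meets each kernel (a k-codimensional closed subspace) only in 0. -/
theorem stmt3 (X : Type*) [NormedAddCommGroup X] [NormedSpace ℝ X] [CompleteSpace X]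
    (Z : Type*) [MetricSpace Z] [CompactSpace Z] [Nonempty Z]
    (k : ℕ) (hk : 0 < k)
    (P : Z → X →L[ℝ] X) (hP_cont : Continuous P)
    (hproj : ∀ z, (P z).comp (P z) = P z)
    (hfin : ∀ z, FiniteDimensional ℝ (LinearMap.range (P z : X →ₗ[ℝ] X)))
    (hdim : ∀ z, Module.finrank ℝ (LinearMap.range (P z : X →ₗ[ℝ] X)) = k)
    (htrans : ∀ z₁ z₂, LinearMap.range (P z₁ : X →ₗ[ℝ] X) ⊓ LinearMap.ker (P z₂ : X →ₗ[ℝ] X) = ⊥) :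
    ∃ δ₀ > (0 : ℝ), ∀ s : ℝ, 0 < s → s ≤ δ₀ →
      IsClosed {u : X | ∃ z, ‖u - P z u‖ ≤ s * ‖P z u‖} ∧
      (∀ lam : ℝ, lam ≠ 0 →
        (fun u : X => lam • u) '' {u : X | ∃ z, ‖u - P z u‖ ≤ s * ‖P z u‖}
          = {u : X | ∃ z, ‖u - P z u‖ ≤ s * ‖P z u‖}) ∧
      (∀ z, (LinearMap.range (P z : X →ₗ[ℝ] X) : Set X) ⊆ {u : X | ∃ z', ‖u - P z' u‖ ≤ s * ‖P z' u‖}) ∧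
      ∀ z₀, {u : X | ∃ z, ‖u - P z u‖ ≤ s * ‖P z u‖} ∩ (LinearMap.ker (P z₀ : X →ₗ[ℝ] X) : Set X) = {0} ∧
        Module.finrank ℝ (X ⧸ LinearMap.ker (P z₀ : X →ₗ[ℝ] X)) = k :=
  stmt3_general X Z k P hP_cont hproj hfin hdim htrans
end

section
/- Let X be a real Banach space, Z a compact metric space, z ↦ R_z a norm-continuous family of bounded linear projections on X, each with finite-dimensional range, and let 𝓗 ⊆ X be a closed linear subspace such that range(R_z) ∩ 𝓗 = {0} for every z ∈ Z. Then there exists δ₁ > 0 such that the only u ∈ 𝓗 satisfying ‖(id − R_z)u‖ ≤ δ₁ ‖R_z u‖ for some z ∈ Z is u = 0. -/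
/-! For a single `z`, the quotient map `X → X ⧸ 𝓗` is injective on the finite-dimensional
range of `R z`, hence bounded below there; this yields `c > 0` with `c ‖u‖ ≤ ‖u - R z u‖` for
`u ∈ 𝓗`. Such a lower bound survives perturbations of `R z` of operator norm `< c / 2`, so by
compactness of `Z` a single `c` works for every `z`. Finally `‖R z u‖ ≤ ‖u‖ + ‖u - R z u‖`, so in
the cone `‖u - R z u‖ ≤ δ₁ ‖R z u‖` with `δ₁ = c / (2 (1 + c))` we get `‖u - R z u‖ = 0`. -/

open Topology

section

variable {𝕜 X : Type*} [NontriviallyNormedField 𝕜] [NormedAddCommGroup X] [NormedSpace 𝕜 X]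

theorem Submodule.exists_norm_le_mul_norm_sub_of_inf_eq_bot [CompleteSpace 𝕜]
    {V H : Submodule 𝕜 X} [FiniteDimensional 𝕜 V] (hH : IsClosed (H : Set X))
    (hVH : V ⊓ H = ⊥) : ∃ K ≥ (0 : ℝ), ∀ v ∈ V, ∀ h ∈ H, ‖v‖ ≤ K * ‖v - h‖ := by
  have := hH
  have hker : LinearMap.ker (H.mkQ ∘ₗ V.subtype) = ⊥ := by
    rw [LinearMap.ker_comp, Submodule.ker_mkQ, ← Submodule.disjoint_iff_comap_eq_bot,
      disjoint_iff, hVH]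
  obtain ⟨K, -, hK⟩ := (H.mkQ ∘ₗ V.subtype).exists_antilipschitzWith hker
  refine ⟨K, K.coe_nonneg, fun v hv h hh => ?_⟩
  calc ‖v‖ ≤ K * ‖H.mkQ v‖ := ZeroHomClass.bound_of_antilipschitz _ hK ⟨v, hv⟩
    _ = K * ‖H.mkQ (v - h)‖ := by
        rw [map_sub, Submodule.mkQ_apply H h, (Submodule.Quotient.mk_eq_zero H).mpr hh, sub_zero]
    _ ≤ K * ‖v - h‖ := by gcongr; exact Submodule.Quotient.norm_mk_le H _

theorem ContinuousLinearMap.exists_mul_norm_le_norm_sub_apply [CompleteSpace 𝕜] (T : X →L[𝕜] X)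
    [FiniteDimensional 𝕜 (LinearMap.range (T : X →ₗ[𝕜] X))] {H : Submodule 𝕜 X}
    (hH : IsClosed (H : Set X)) (hTH : LinearMap.range (T : X →ₗ[𝕜] X) ⊓ H = ⊥) :
    ∃ c > (0 : ℝ), ∀ u ∈ H, c * ‖u‖ ≤ ‖u - T u‖ := by
  obtain ⟨K, hK, hKTH⟩ := Submodule.exists_norm_le_mul_norm_sub_of_inf_eq_bot hH hTH
  refine ⟨(1 + K)⁻¹, by positivity, fun u hu => ?_⟩
  have hTu : ‖T u‖ ≤ K * ‖u - T u‖ := by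
    rw [norm_sub_rev]; exact hKTH _ (LinearMap.mem_range_self _ u) u hu
  rw [inv_mul_le_iff₀ (by positivity)]
  linarith [norm_le_norm_add_norm_sub' u (T u)]

theorem exists_forall_mul_norm_le_norm_sub_apply {Z : Type*} [TopologicalSpace Z] [CompactSpace Z]
    {R : Z → X →L[𝕜] X} (hR : Continuous R) {S : Set X}
    (hRS : ∀ z, ∃ c > (0 : ℝ), ∀ u ∈ S, c * ‖u‖ ≤ ‖u - R z u‖) :
    ∃ c > (0 : ℝ), ∀ z, ∀ u ∈ S, c * ‖u‖ ≤ ‖u - R z u‖ := by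
  have hloc (z : Z) : ∀ᶠ p : ℝ × Z in 𝓝 (0, z), ∀ u ∈ S, p.1 * ‖u‖ ≤ ‖u - R p.2 u‖ := by
    obtain ⟨c, hc, hcz⟩ := hRS z
    have hfst : ∀ᶠ p : ℝ × Z in 𝓝 (0, z), p.1 < c / 2 :=
      continuous_fst.tendsto (0, z) |>.eventually (gt_mem_nhds (half_pos hc))
    have hsnd : ∀ᶠ p : ℝ × Z in 𝓝 (0, z), ‖R p.2 - R z‖ < c / 2 := by
      have := (hR.comp continuous_snd).tendsto ((0 : ℝ), z)
      exact this.eventually (eventually_norm_sub_lt _ (half_pos hc))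
    filter_upwards [hfst, hsnd] with p hp1 hp2 u hu
    have hpert : ‖(R p.2 - R z) u‖ ≤ c / 2 * ‖u‖ :=
      ((R p.2 - R z).le_opNorm u).trans (by gcongr)
    calc p.1 * ‖u‖ ≤ c / 2 * ‖u‖ := by gcongr
      _ ≤ ‖u - R z u‖ - ‖(R p.2 - R z) u‖ := by linarith [hcz u hu]
      _ ≤ ‖u - R p.2 u‖ := by
          have hsplit : u - R p.2 u = (u - R z u) - (R p.2 - R z) u := by
            rw [sub_apply]; abel
          rw [hsplit]
          exact norm_sub_norm_le _ _
  have hunif : ∀ᶠ c in 𝓝[>] (0 : ℝ), ∀ z, ∀ u ∈ S, c * ‖u‖ ≤ ‖u - R z u‖ := by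
    have := isCompact_univ.eventually_forall_of_forall_eventually
      (P := fun (c : ℝ) z => ∀ u ∈ S, c * ‖u‖ ≤ ‖u - R z u‖) (x₀ := 0) fun z _ => hloc z
    exact nhdsWithin_le_nhds (this.mono fun c hc z => hc z trivial)
  obtain ⟨c, hc, hcpos⟩ := (hunif.and self_mem_nhdsWithin).exists
  exact ⟨c, hcpos, hc⟩

end

theorem eq_zero_of_mul_norm_le_norm_sub_of_norm_sub_le {E : Type*} [NormedAddCommGroup E]
    {u w : E} {c : ℝ} (hc : 0 < c) (hlow : c * ‖u‖ ≤ ‖u - w‖)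
    (hcone : ‖u - w‖ ≤ c / (2 * (1 + c)) * ‖w‖) : u = 0 := by
  have hw : ‖w‖ ≤ ‖u‖ + ‖u - w‖ := norm_le_norm_add_norm_sub u w
  have hcone' : 2 * (1 + c) * ‖u - w‖ ≤ c * ‖w‖ := by
    rw [div_mul_eq_mul_div, le_div_iff₀ (by positivity)] at hcone; linarith
  have hzero : ‖u - w‖ ≤ 0 := by nlinarith [norm_nonneg (u - w)]
  exact norm_le_zero_iff.mp (le_of_mul_le_mul_left (by linarith) hc)

theorem stmt6_general (X : Type*) [NormedAddCommGroup X] [NormedSpace ℝ X]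
    (Z : Type*) [MetricSpace Z] [CompactSpace Z]
    (R : Z → X →L[ℝ] X) (hR_cont : Continuous R)
    (hfin : ∀ z, FiniteDimensional ℝ (LinearMap.range (R z : X →ₗ[ℝ] X)))
    (H : Submodule ℝ X) (hH : IsClosed (H : Set X))
    (htrans : ∀ z, LinearMap.range (R z : X →ₗ[ℝ] X) ⊓ H = ⊥) :
    ∃ δ₁ > (0 : ℝ), ∀ u ∈ H, (∃ z, ‖u - R z u‖ ≤ δ₁ * ‖R z u‖) → u = 0 := by
  obtain ⟨c, hc, hcR⟩ := exists_forall_mul_norm_le_norm_sub_apply hR_cont fun z =>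
    have := hfin z
    (R z).exists_mul_norm_le_norm_sub_apply hH (htrans z)
  exact ⟨c / (2 * (1 + c)), by positivity, fun u hu ⟨z, hz⟩ =>
    eq_zero_of_mul_norm_le_norm_sub_of_norm_sub_le hc (hcR z u hu) hz⟩

/-- A closed subspace 𝓗 transverse to the ranges of a continuous family of
finite-rank projections stays away from the cones 𝒲(δ₁) for small δ₁. -/
theorem stmt6 (X : Type*) [NormedAddCommGroup X] [NormedSpace ℝ X] [CompleteSpace X]
    (Z : Type*) [MetricSpace Z] [CompactSpace Z]
    (R : Z → X →L[ℝ] X) (hR_cont : Continuous R)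
    (hproj : ∀ z, (R z).comp (R z) = R z)
    (hfin : ∀ z, FiniteDimensional ℝ (LinearMap.range (R z : X →ₗ[ℝ] X)))
    (H : Submodule ℝ X) (hH : IsClosed (H : Set X))
    (htrans : ∀ z, LinearMap.range (R z : X →ₗ[ℝ] X) ⊓ H = ⊥) :
    ∃ δ₁ > (0 : ℝ), ∀ u ∈ H, (∃ z, ‖u - R z u‖ ≤ δ₁ * ‖R z u‖) → u = 0 :=
  stmt6_general X Z R hR_cont hfin H hH htrans
end

section
/- Let X be a real Banach space, Z a nonempty compact metric space, z ↦ P_z a norm-continuous family of bounded linear projections on X with finite-dimensional ranges, and z ↦ T_z a norm-continuous family of bounded linear operators on X such that for every z ∈ Z the restriction of T_z to range(P_z) is injective. Then there exists a constant c > 0 such that ‖T_z u‖ ≥ c‖u‖ for every z ∈ Z and every u ∈ range(P_z). -/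
/-!
The pairs `(z, u)` with `u` a unit vector fixed by `P z` form a compact subset of `Z × X`:
along a sequence, first make `z` converge, then use that `P z u` stays in the bounded part of
the finite-dimensional range of the limit projection `P z` and that `u - P z u` tends to zero.
On this compact set `‖T z u‖` is continuous and, by injectivity, positive; its positive
minimum is the constant, and homogeneity extends the bound from unit vectors to all of the range.
-/

open Filter Topology Bornology

theorem ContinuousLinearMap.mul_norm_le_norm_apply_of_forall_norm_eq_one
    {X Y : Type*} [NormedAddCommGroup X] [NormedSpace ℝ X] [NormedAddCommGroup Y]
    [NormedSpace ℝ Y] (T : X →L[ℝ] Y) (S : Submodule ℝ X) {c : ℝ}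
    (h : ∀ u ∈ S, ‖u‖ = 1 → c ≤ ‖T u‖) : ∀ u ∈ S, c * ‖u‖ ≤ ‖T u‖ := by
  intro u hu
  rcases eq_or_ne u 0 with rfl | hu0
  · simp
  have hnorm : 0 < ‖u‖ := norm_pos_iff.mpr hu0
  have hunit := h (‖u‖⁻¹ • u) (S.smul_mem _ hu) (norm_smul_inv_norm hu0)
  rw [map_smul, norm_smul, norm_inv, norm_norm, le_inv_mul_iff₀ hnorm] at hunit
  linarith

theorem isCompact_setOf_isFixedPt_and_mem {Z X : Type*} [MetricSpace Z] [CompactSpace Z]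
    [NormedAddCommGroup X] [NormedSpace ℝ X] {P : Z → X →L[ℝ] X} (hP : Continuous P)
    (hfin : ∀ z, FiniteDimensional ℝ (LinearMap.range (P z : X →ₗ[ℝ] X)))
    {s : Set X} (hs_closed : IsClosed s) (hs_bdd : IsBounded s) :
    IsCompact {p : Z × X | Function.IsFixedPt (P p.1) p.2 ∧ p.2 ∈ s} := by
  have hclosed : IsClosed {p : Z × X | Function.IsFixedPt (P p.1) p.2 ∧ p.2 ∈ s} :=
    (isClosed_eq ((hP.comp continuous_fst).clm_apply continuous_snd) continuous_snd).inter
      (hs_closed.preimage continuous_snd)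
  refine IsSeqCompact.isCompact fun x hx => ?_
  obtain ⟨R, hR⟩ := isBounded_iff_forall_norm_le.mp hs_bdd
  obtain ⟨z, φ, hφ, hz⟩ := CompactSpace.tendsto_subseq fun n => (x n).1
  have := hfin z
  let w : ℕ → LinearMap.range (P z : X →ₗ[ℝ] X) :=
    fun n => ⟨P z (x (φ n)).2, LinearMap.mem_range_self _ _⟩
  have hw : ∀ n, w n ∈ Metric.closedBall 0 (‖P z‖ * R) := fun n => by
    rw [mem_closedBall_zero_iff, Submodule.coe_norm]
    exact (P z).le_opNorm_of_le (hR _ (hx _).2)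
  obtain ⟨v, -, ψ, hψ, hv⟩ := tendsto_subseq_of_bounded Metric.isBounded_closedBall hw
  have hzψ : Tendsto (fun n => (x (φ (ψ n))).1) atTop (𝓝 z) := hz.comp hψ.tendsto_atTop
  have hdefect : Tendsto (fun n => (x (φ (ψ n))).2 - P z (x (φ (ψ n))).2) atTop (𝓝 0) := by
    have hop : Tendsto (fun n => ‖P (x (φ (ψ n))).1 - P z‖ * R) atTop (𝓝 0) := by
      simpa using ((hP.tendsto z).comp hzψ).sub_const (P z) |>.norm.mul_const R
    refine squeeze_zero_norm (fun n => ?_) hop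
    calc ‖(x (φ (ψ n))).2 - P z (x (φ (ψ n))).2‖
        = ‖(P (x (φ (ψ n))).1 - P z) (x (φ (ψ n))).2‖ := by
          rw [sub_apply, (hx (φ (ψ n))).1]
      _ ≤ ‖P (x (φ (ψ n))).1 - P z‖ * R := (P _ - P z).le_opNorm_of_le (hR _ (hx _).2)
  have hlim : Tendsto (x ∘ φ ∘ ψ) atTop (𝓝 (z, (v : X))) := by
    refine hzψ.prodMk_nhds ?_
    simpa only [w, Function.comp_apply, sub_add_cancel, zero_add] using
      hdefect.add ((continuous_subtype_val.tendsto v).comp hv)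
  exact ⟨_, hclosed.mem_of_tendsto hlim (Eventually.of_forall fun n => hx _), φ ∘ ψ,
    hφ.comp hψ, hlim⟩

theorem stmt7_general (X : Type*) [NormedAddCommGroup X] [NormedSpace ℝ X]
    (Z : Type*) [MetricSpace Z] [CompactSpace Z]
    (P : Z → X →L[ℝ] X) (hP_cont : Continuous P)
    (hproj : ∀ z, (P z).comp (P z) = P z)
    (hfin : ∀ z, FiniteDimensional ℝ (LinearMap.range (P z : X →ₗ[ℝ] X)))
    (T : Z → X →L[ℝ] X) (hT_cont : Continuous T)
    (hinj : ∀ z, Set.InjOn (fun u => T z u) (LinearMap.range (P z : X →ₗ[ℝ] X) : Set X)) :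
    ∃ c > (0 : ℝ), ∀ z, ∀ u ∈ LinearMap.range (P z : X →ₗ[ℝ] X), c * ‖u‖ ≤ ‖T z u‖ := by
  have hmem : ∀ z u, u ∈ LinearMap.range (P z : X →ₗ[ℝ] X) ↔ Function.IsFixedPt (P z) u :=
    fun z _ => LinearMap.IsIdempotentElem.mem_range_iff
      (ContinuousLinearMap.isIdempotentElem_toLinearMap_iff.mpr (hproj z))
  have hK := isCompact_setOf_isFixedPt_and_mem hP_cont hfin (s := Metric.sphere 0 1)
    Metric.isClosed_sphere Metric.isBounded_sphere
  have hpos : ∀ p ∈ {p : Z × X | Function.IsFixedPt (P p.1) p.2 ∧ p.2 ∈ Metric.sphere 0 1},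
      0 < ‖T p.1 p.2‖ := by
    rintro ⟨z, u⟩ ⟨hfix, hu⟩
    refine norm_pos_iff.mpr fun hTu => ?_
    have hu0 : u = 0 := hinj z ((hmem z u).mpr hfix) (Submodule.zero_mem _) (by simpa using hTu)
    simp [hu0] at hu
  obtain ⟨c, hc, hcK⟩ := hK.exists_forall_le'
    ((hT_cont.comp continuous_fst).clm_apply continuous_snd).norm.continuousOn hpos
  refine ⟨c, hc, fun z => (T z).mul_norm_le_norm_apply_of_forall_norm_eq_one _ ?_⟩
  intro u hu hu1
  exact hcK (z, u) ⟨(hmem z u).mp hu, mem_sphere_zero_iff_norm.mpr hu1⟩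

/-- Uniform lower bound for a continuous family of operators injective on the
finite-dimensional ranges of a continuous family of projections. -/
theorem stmt7 (X : Type*) [NormedAddCommGroup X] [NormedSpace ℝ X] [CompleteSpace X]
    (Z : Type*) [MetricSpace Z] [CompactSpace Z] [Nonempty Z]
    (P : Z → X →L[ℝ] X) (hP_cont : Continuous P)
    (hproj : ∀ z, (P z).comp (P z) = P z)
    (hfin : ∀ z, FiniteDimensional ℝ (LinearMap.range (P z : X →ₗ[ℝ] X)))
    (T : Z → X →L[ℝ] X) (hT_cont : Continuous T)
    (hinj : ∀ z, Set.InjOn (fun u => T z u) (LinearMap.range (P z : X →ₗ[ℝ] X) : Set X)) :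
    ∃ c > (0 : ℝ), ∀ z, ∀ u ∈ LinearMap.range (P z : X →ₗ[ℝ] X), c * ‖u‖ ≤ ‖T z u‖ :=
  stmt7_general X Z P hP_cont hproj hfin T hT_cont hinj
end

section
/- Let u : [0,1] → ℝ be continuous and let v : [0,1] → ℝ be given by v(x) = c(eˣ + e^{−x}) + ∫₀ˣ (e^{y−x} − e^{x−y})/2 · u(y) dy with c = ∫₀¹ (e^{2−y} + e^{y})/(2(e² − 1)) · u(y) dy. Then sup_{x∈[0,1]} |v(x)| ≤ (3e² − e)/(2(e − 1)) · sup_{x∈[0,1]} |u(x)|. -/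
/-!
The constant `c` is an average of `u` against the weight `(e^{2-y} + e^y) / (2(e² - 1))`,
which is at most `(e² + e) / (2(e² - 1)) = e / (2(e - 1))`, and it multiplies
`e^x + e^{-x} = 2 cosh x ≤ e + 1`. The integral term has kernel `sinh (y - x)`, bounded by
`sinh 1 ≤ e / 2` on `[0, 1]`. Adding up gives `e (e + 1) / (2(e - 1)) + e / 2`, below
`e (e + 1) / (2(e - 1)) + e = (3e² - e) / (2(e - 1))`.
-/

open Real Set

lemma abs_intervalIntegral_mul_le {k u : ℝ → ℝ} {a b A M : ℝ} (hab : a ≤ b) (hA : 0 ≤ A)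
    (hk : ∀ y ∈ Ioc a b, |k y| ≤ A) (hu : ∀ y ∈ Ioc a b, |u y| ≤ M) :
    |∫ y in a..b, k y * u y| ≤ A * M * (b - a) := by
  have h := intervalIntegral.norm_integral_le_of_norm_le_const (f := fun y => k y * u y)
    (C := A * M) fun y hy => by
      rw [uIoc_of_le hab] at hy
      rw [norm_mul]
      exact mul_le_mul (hk y hy) (hu y hy) (abs_nonneg _) hA
  rwa [abs_of_nonneg (sub_nonneg.2 hab)] at h

lemma abs_sinh_le_of_abs_le_one {t : ℝ} (ht : |t| ≤ 1) : |sinh t| ≤ exp 1 / 2 := by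
  calc |sinh t| = sinh |t| := abs_sinh t
    _ ≤ sinh 1 := sinh_le_sinh.2 ht
    _ ≤ exp 1 / 2 := by rw [sinh_eq]; linarith [exp_pos (-1)]

lemma exp_add_exp_neg_le_of_abs_le_one {x : ℝ} (hx : |x| ≤ 1) : exp x + exp (-x) ≤ exp 1 + 1 := by
  have hcosh : cosh x ≤ cosh 1 := cosh_le_cosh.2 (by rwa [abs_one])
  rw [cosh_eq, cosh_eq] at hcosh
  linarith [exp_le_one_iff.2 (neg_nonpos.2 zero_le_one)]

lemma abs_neumann_weight_le {y : ℝ} (hy : y ∈ Icc (0 : ℝ) 1) :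
    |(exp (2 - y) + exp y) / (2 * (exp 2 - 1))| ≤ exp 1 / (2 * (exp 1 - 1)) := by
  have he : 1 < exp 1 := one_lt_exp_iff.2 one_pos
  have hexp2 : exp 2 = exp 1 ^ 2 := by rw [← exp_nat_mul]; norm_num
  calc |(exp (2 - y) + exp y) / (2 * (exp 2 - 1))|
      = (exp (2 - y) + exp y) / (2 * (exp 2 - 1)) :=
        abs_of_pos (div_pos (by positivity) (by rw [hexp2]; nlinarith))
    _ ≤ (exp 2 + exp 1) / (2 * (exp 2 - 1)) := by
        gcongr
        · rw [hexp2]; nlinarith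
        · linarith [hy.1]
        · exact hy.2
    _ = exp 1 / (2 * (exp 1 - 1)) := by
        rw [hexp2, div_eq_div_iff (by nlinarith) (by linarith)]
        ring

lemma neumann_sup_constant_le :
    exp 1 / (2 * (exp 1 - 1)) * (exp 1 + 1) + exp 1 / 2 ≤
      (3 * exp 2 - exp 1) / (2 * (exp 1 - 1)) := by
  have he : exp 1 - 1 ≠ 0 := (sub_pos.2 (one_lt_exp_iff.2 one_pos)).ne'
  have hexp2 : exp 2 = exp 1 ^ 2 := by rw [← exp_nat_mul]; norm_num
  have hsum : exp 1 / (2 * (exp 1 - 1)) * (exp 1 + 1) + exp 1 =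
      (3 * exp 2 - exp 1) / (2 * (exp 1 - 1)) := by
    rw [hexp2]
    field_simp
    ring
  linarith [exp_pos 1]

section

variable {u : ℝ → ℝ} {M : ℝ} (hu : ∀ y ∈ Icc (0:ℝ) 1, |u y| ≤ M)
include hu

lemma abs_neumann_coeff_le :
    |∫ y in (0:ℝ)..1, (exp (2 - y) + exp y) / (2 * (exp 2 - 1)) * u y| ≤
      exp 1 / (2 * (exp 1 - 1)) * M := by
  have hK : 0 ≤ exp 1 / (2 * (exp 1 - 1)) :=
    div_nonneg (exp_pos 1).le (by linarith [one_lt_exp_iff.2 (one_pos (α := ℝ))])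
  simpa using abs_intervalIntegral_mul_le zero_le_one hK
    (fun y hy => abs_neumann_weight_le (Ioc_subset_Icc_self hy))
    (fun y hy => hu y (Ioc_subset_Icc_self hy))

lemma abs_green_integral_le {x : ℝ} (hx : x ∈ Icc (0:ℝ) 1) :
    |∫ y in (0:ℝ)..x, (exp (y - x) - exp (x - y)) / 2 * u y| ≤ exp 1 / 2 * M := by
  have hM : 0 ≤ M := (abs_nonneg _).trans (hu x hx)
  have hI := abs_intervalIntegral_mul_le (k := fun y => (exp (y - x) - exp (x - y)) / 2)
    (A := exp 1 / 2) hx.1 (by positivity)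
    (fun y hy => by
      rw [← neg_sub y x, ← sinh_eq]
      exact abs_sinh_le_of_abs_le_one (abs_le.2 ⟨by linarith [hy.1, hx.2], by linarith [hy.2]⟩))
    (fun y hy => hu y ⟨hy.1.le, hy.2.trans hx.2⟩)
  rw [sub_zero] at hI
  exact hI.trans (mul_le_of_le_one_right (mul_nonneg (by positivity) hM) hx.2)

lemma abs_neumann_solution_le {c : ℝ} (hc : |c| ≤ exp 1 / (2 * (exp 1 - 1)) * M)
    {x : ℝ} (hx : x ∈ Icc (0:ℝ) 1) :
    |c * (exp x + exp (-x)) + ∫ y in (0:ℝ)..x, (exp (y - x) - exp (x - y)) / 2 * u y| ≤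
      (3 * exp 2 - exp 1) / (2 * (exp 1 - 1)) * M := by
  have hM : 0 ≤ M := (abs_nonneg _).trans (hu x hx)
  have hcosh := exp_add_exp_neg_le_of_abs_le_one (abs_le.2 ⟨by linarith [hx.1], hx.2⟩)
  calc |c * (exp x + exp (-x)) + ∫ y in (0:ℝ)..x, (exp (y - x) - exp (x - y)) / 2 * u y|
      ≤ |c| * (exp x + exp (-x)) + |∫ y in (0:ℝ)..x, (exp (y - x) - exp (x - y)) / 2 * u y| :=
        (abs_add_le _ _).trans_eq (by rw [abs_mul, abs_of_pos (by positivity : 0 < exp x + exp (-x))])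
    _ ≤ |c| * (exp 1 + 1) + exp 1 / 2 * M :=
        add_le_add (mul_le_mul_of_nonneg_left hcosh (abs_nonneg c)) (abs_green_integral_le hu hx)
    _ ≤ (exp 1 / (2 * (exp 1 - 1)) * (exp 1 + 1) + exp 1 / 2) * M := by
        linarith [mul_le_mul_of_nonneg_right hc (by positivity : 0 ≤ exp 1 + 1)]
    _ ≤ _ := by gcongr; exact neumann_sup_constant_le

end

/-- Sup-norm bound for the solution of the Neumann problem v'' − v + u = 0. -/
theorem stmt10 (u : ℝ → ℝ) (hu : ContinuousOn u (Set.Icc 0 1))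
    (c : ℝ)
    (hc : c = ∫ y in (0:ℝ)..1, (Real.exp (2 - y) + Real.exp y) / (2 * (Real.exp 2 - 1)) * u y)
    (v : ℝ → ℝ)
    (hv : ∀ x, v x = c * (Real.exp x + Real.exp (-x)) +
      ∫ y in (0:ℝ)..x, (Real.exp (y - x) - Real.exp (x - y)) / 2 * u y) :
    sSup ((fun x => |v x|) '' Set.Icc (0:ℝ) 1) ≤
      (3 * Real.exp 2 - Real.exp 1) / (2 * (Real.exp 1 - 1)) *
        sSup ((fun x => |u x|) '' Set.Icc (0:ℝ) 1) := by
  have hu_le : ∀ y ∈ Icc (0:ℝ) 1, |u y| ≤ sSup ((fun x => |u x|) '' Icc (0:ℝ) 1) :=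
    fun y hy => le_csSup (isCompact_Icc.bddAbove_image hu.abs) (mem_image_of_mem _ hy)
  refine csSup_le ((nonempty_Icc.2 zero_le_one).image _) (forall_mem_image.2 fun x hx => ?_)
  rw [hv x]
  exact abs_neumann_solution_le hu_le (hc ▸ abs_neumann_coeff_le hu_le) hx
end

section
/- Let f : ℝ × [0,1] × ℝ × ℝ → ℝ be continuous and continuously differentiable in its last two arguments, and suppose there are constants ξ, M₀, η₀ > 0 such that f(t,x,u,p) ≤ −ξu + M₀ whenever u ≥ 0 and |p| ≤ η₀, and f(t,x,u,p) ≥ −ξu − M₀ whenever u ≤ 0 and |p| ≤ η₀ (for all t ∈ ℝ, x ∈ [0,1]). Let c : ℝ × [0,1] → ℝ and ν : [0,1] → ℝ be continuous and bounded, with ‖c‖∞ = sup |c| and ‖ν‖∞ = sup |ν|, and let ε ≥ 0 satisfy ε‖c‖∞‖ν‖∞ < ξ; set M* = M₀/(ξ − ε‖c‖∞‖ν‖∞). Then every classical solution U of the nonlocal problem U_t = U_xx + f(t,x,U,U_x) + ε c(t,x) ∫₀¹ ν(y) U(t,y) dy on (0,∞) × [0,1], with Neumann boundary conditions U_x(t,0)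 = U_x(t,1) = 0 for t > 0, satisfies limsup_{t→∞} max_{x∈[0,1]} |U(t,x)| ≤ M*. -/
/-!
Comparison with the barrier `m(t) = A e^{-κt} + M₀/κ + δ`, where `κ = ξ - ε‖c‖‖ν‖` and
`A ≥ max |U(0,·)|`, so that `m' = -κ m + M₀ + κδ`. If `|U|` ever reached `m`, take the first
contact time `t` and a contact point `x`, say with `U(t,x) = m(t)`. Then `U(t,·)` is maximal at
`x`, so `U_x = 0` (by Fermat inside, by the Neumann condition on the boundary) and `U_xx ≤ 0`,
while `U_t ≥ m'(t)` since `U(·,x)` stays below `m` before `t`. As `|U(t,·)| ≤ m(t)`, the nonlocal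
term is at most `ε‖c‖‖ν‖ m(t)`, and dissipativity of `f` at `U_x = 0` gives
`U_t ≤ -κ m + M₀ < m'(t)`, a contradiction; the case `U(t,x) = -m(t)` is symmetric.
Letting `δ → 0`, `|U(t,·)| ≤ A e^{-κt} + M₀/κ` for all `t ≥ 0`.
-/

open Set Filter Topology

lemma deriv_eq_zero_of_isMaxOn_Icc {g g' : ℝ → ℝ} {a b x : ℝ} (hx : x ∈ Icc a b)
    (hg : HasDerivWithinAt g (g' x) (Icc a b) x) (hmax : IsMaxOn g (Icc a b) x)
    (ha : g' a = 0) (hb : g' b = 0) : g' x = 0 := by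
  rcases hx.1.eq_or_lt with rfl | hax
  · exact ha
  rcases hx.2.eq_or_lt with rfl | hxb
  · exact hb
  have hnhds : Icc a b ∈ 𝓝 x := Icc_mem_nhds hax hxb
  exact (hmax.isLocalMax hnhds).hasDerivAt_eq_zero (hg.hasDerivAt hnhds)

lemma second_deriv_nonpos_of_isMaxOn_Icc {g g' : ℝ → ℝ} {a b x c : ℝ} (hab : a < b)
    (hx : x ∈ Icc a b) (hg : ∀ y ∈ Icc a b, HasDerivWithinAt g (g' y) (Icc a b) y)
    (hg' : HasDerivWithinAt g' c (Icc a b) x) (hmax : IsMaxOn g (Icc a b) x) (hx0 : g' x = 0) :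
    c ≤ 0 := by
  by_contra! hc
  obtain ⟨r, hr, hslope⟩ := Metric.mem_nhdsWithin_iff.1
    ((hasDerivWithinAt_iff_tendsto_slope.1 hg').eventually (lt_mem_nhds hc))
  have hsign : ∀ z ∈ Icc a b, z ≠ x → |z - x| < r → 0 < g' z / (z - x) := fun z hz hzx hzr => by
    simpa [slope_def_field, hx0] using hslope ⟨by rwa [Metric.mem_ball, Real.dist_eq], hz, hzx⟩
  have hcont : ContinuousOn g (Icc a b) := fun y hy => (hg y hy).continuousWithinAt
  have hderiv : ∀ {p q}, Icc p q ⊆ Icc a b →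
      ∀ z ∈ interior (Icc p q), HasDerivWithinAt g (g' z) (interior (Icc p q)) z :=
    fun hpq z hz => (hg z (hpq (interior_subset hz))).mono (interior_subset.trans hpq)
  rcases lt_or_ge x b with hxb | hbx
  · -- `g' > 0` just right of `x`, so `g` increases there
    set y := min (x + r / 2) b
    have hxy : x < y := lt_min (by linarith) hxb
    have hsub : Icc x y ⊆ Icc a b := Icc_subset_Icc hx.1 (min_le_right _ _)
    have hmono := strictMonoOn_of_hasDerivWithinAt_pos (convex_Icc x y) (hcont.mono hsub)
      (hderiv hsub) fun z hz => by
        rw [interior_Icc] at hz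
        have hzr : |z - x| < r := by
          rw [abs_of_pos (sub_pos.2 hz.1)]; linarith [hz.2.trans_le (min_le_left _ _)]
        exact (div_pos_iff_of_pos_right (sub_pos.2 hz.1)).1
          (hsign z (hsub (Ioo_subset_Icc_self hz)) hz.1.ne' hzr)
    exact (hmono (left_mem_Icc.2 hxy.le) (right_mem_Icc.2 hxy.le) hxy).not_ge
      (hmax (hsub (right_mem_Icc.2 hxy.le)))
  · -- `x = b`, and `g' < 0` just left of `x`, so `g` decreases towards `x`
    set y := max (x - r / 2) a
    have hyx : y < x := max_lt (by linarith) (hab.trans_le hbx)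
    have hsub : Icc y x ⊆ Icc a b := Icc_subset_Icc (le_max_right _ _) hx.2
    have hanti := strictAntiOn_of_hasDerivWithinAt_neg (convex_Icc y x) (hcont.mono hsub)
      (hderiv hsub) fun z hz => by
        rw [interior_Icc] at hz
        have hzr : |z - x| < r := by
          rw [abs_of_neg (sub_neg.2 hz.2)]; linarith [(le_max_left _ _).trans_lt hz.1]
        have := hsign z (hsub (Ioo_subset_Icc_self hz)) hz.2.ne hzr
        simpa using (lt_div_iff_of_neg (sub_neg.2 hz.2)).1 this
    exact (hanti (left_mem_Icc.2 hyx.le) (right_mem_Icc.2 hyx.le) hyx).not_ge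
      (hmax (hsub (left_mem_Icc.2 hyx.le)))

lemma HasDerivAt.le_of_eventually_le_nhdsLT {φ m : ℝ → ℝ} {φ' m' t : ℝ}
    (hφ : HasDerivAt φ φ' t) (hm : HasDerivAt m m' t) (hle : ∀ᶠ s in 𝓝[<] t, φ s ≤ m s)
    (heq : φ t = m t) : m' ≤ φ' := by
  have hslope := (hasDerivWithinAt_iff_tendsto_slope' (s := Iio t) (lt_irrefl t)).1
    (hφ.sub hm).hasDerivWithinAt
  refine sub_nonneg.1 (ge_of_tendsto hslope ?_)
  filter_upwards [hle, self_mem_nhdsWithin] with s hs hst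
  rw [slope_def_field, Pi.sub_apply, Pi.sub_apply, heq, sub_self, sub_zero]
  exact div_nonneg_of_nonpos (sub_nonpos.2 hs) (sub_nonpos.2 (le_of_lt hst))

lemma first_contact_conditions {u : ℝ → ℝ → ℝ} {ux m : ℝ → ℝ} {ut uxx m' a b t₀ t x : ℝ}
    (hab : a < b) (ht : t₀ < t) (hx : x ∈ Icc a b)
    (hux : ∀ y ∈ Icc a b, HasDerivWithinAt (fun y => u t y) (ux y) (Icc a b) y)
    (huxx : HasDerivWithinAt ux uxx (Icc a b) x) (hbc : ux a = 0 ∧ ux b = 0)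
    (hut : HasDerivAt (fun s => u s x) ut t) (hm : HasDerivAt m m' t)
    (hbelow : ∀ s ∈ Icc t₀ t, ∀ y ∈ Icc a b, u s y ≤ m s) (htouch : u t x = m t) :
    ux x = 0 ∧ uxx ≤ 0 ∧ m' ≤ ut := by
  have hmax : IsMaxOn (fun y => u t y) (Icc a b) x := fun y hy =>
    (hbelow t ⟨ht.le, le_rfl⟩ y hy).trans htouch.ge
  have hux0 := deriv_eq_zero_of_isMaxOn_Icc hx (hux x hx) hmax hbc.1 hbc.2
  refine ⟨hux0, second_deriv_nonpos_of_isMaxOn_Icc hab hx hux huxx hmax hux0, ?_⟩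
  refine hut.le_of_eventually_le_nhdsLT hm ?_ htouch
  filter_upwards [Ioo_mem_nhdsLT ht] with s hs
  exact hbelow s ⟨hs.1.le, hs.2.le⟩ x hx

lemma exists_first_contact {X : Type*} [TopologicalSpace X] [T2Space X] {K : Set X}
    {F : ℝ → X → ℝ} {a b : ℝ} (hab : a ≤ b) (hK : IsCompact K)
    (hF : ContinuousOn (fun q : ℝ × X => F q.1 q.2) (Icc a b ×ˢ K))
    (ha : ∀ x ∈ K, F a x < 0) (hb : ∃ x ∈ K, 0 ≤ F b x) :
    ∃ t ∈ Ioc a b, ∃ x ∈ K, F t x = 0 ∧ ∀ s ∈ Icc a t, ∀ y ∈ K, F s y ≤ 0 := by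
  set E := Icc a b ×ˢ K ∩ (fun q : ℝ × X => F q.1 q.2) ⁻¹' Ici 0
  have hE : IsCompact E := (isCompact_Icc.prod hK).of_isClosed_subset
    (hF.preimage_isClosed_of_isClosed (isClosed_Icc.prod hK.isClosed) isClosed_Ici)
    inter_subset_left
  obtain ⟨x₀, hx₀, hbx₀⟩ := hb
  obtain ⟨⟨t, x⟩, ⟨⟨ht, hx⟩, htx⟩, hmin⟩ :=
    hE.exists_isMinOn ⟨(b, x₀), ⟨⟨right_mem_Icc.2 hab, hx₀⟩, hbx₀⟩⟩ continuous_fst.continuousOn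
  have hbefore : ∀ s ∈ Ico a t, ∀ y ∈ K, F s y < 0 := fun s hs y hy =>
    lt_of_not_ge fun h =>
      (show t ≤ s from hmin (a := (s, y)) ⟨⟨⟨hs.1, hs.2.le.trans ht.2⟩, hy⟩, h⟩).not_gt hs.2
  have hat : a < t := ht.1.lt_of_ne (by rintro rfl; exact (ha x hx).not_ge htx)
  have hle : ∀ y ∈ K, F t y ≤ 0 := fun y hy => by
    have hcont : ContinuousOn (fun s => F s y) (Icc a b) :=
      hF.comp (continuous_id.prodMk continuous_const).continuousOn fun s hs => ⟨hs, hy⟩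
    refine ContinuousWithinAt.closure_le (by rw [closure_Ico hat.ne]; exact right_mem_Icc.2 hat.le)
      ((hcont t ht).mono (Ico_subset_Icc_self.trans (Icc_subset_Icc le_rfl ht.2)))
      continuousWithinAt_const fun s hs => (hbefore s hs y hy).le
  refine ⟨t, ⟨hat, ht.2⟩, x, hx, (hle x hx).antisymm htx, fun s hs y hy => ?_⟩
  rcases hs.2.lt_or_eq with hst | rfl
  · exact (hbefore s ⟨hs.1, hst⟩ y hy).le
  · exact hle y hy

theorem abs_le_of_barrier {U Ut Ux Uxx : ℝ → ℝ → ℝ} {m m' : ℝ → ℝ} {a b t₀ : ℝ} (hab : a < b)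
    (hU : ContinuousOn (fun q : ℝ × ℝ => U q.1 q.2) (Ici t₀ ×ˢ Icc a b))
    (hUt : ∀ t > t₀, ∀ x ∈ Icc a b, HasDerivAt (fun s => U s x) (Ut t x) t)
    (hUx : ∀ t > t₀, ∀ x ∈ Icc a b, HasDerivWithinAt (fun y => U t y) (Ux t x) (Icc a b) x)
    (hUxx : ∀ t > t₀, ∀ x ∈ Icc a b, HasDerivWithinAt (fun y => Ux t y) (Uxx t x) (Icc a b) x)
    (hbc : ∀ t > t₀, Ux t a = 0 ∧ Ux t b = 0)
    (hm : Continuous m) (hm' : ∀ t > t₀, HasDerivAt m (m' t) t)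
    (h₀ : ∀ x ∈ Icc a b, |U t₀ x| < m t₀)
    (hsuper : ∀ t > t₀, ∀ x ∈ Icc a b, (∀ y ∈ Icc a b, |U t y| ≤ m t) → Ux t x = 0 →
      (U t x = m t → Ut t x - Uxx t x < m' t) ∧ (U t x = -m t → -m' t < Ut t x - Uxx t x)) :
    ∀ t ≥ t₀, ∀ x ∈ Icc a b, |U t x| ≤ m t := by
  intro t₁ ht₁ x₁ hx₁
  by_contra! hcross
  obtain ⟨t, ⟨ht, -⟩, x, hx, htouch, hbelow⟩ :=
    exists_first_contact (F := fun t x => |U t x| - m t) ht₁ isCompact_Icc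
      ((hU.mono (prod_mono Icc_subset_Ici_self subset_rfl)).abs.sub
        (hm.comp continuous_fst).continuousOn)
      (fun x hx => sub_neg.2 (h₀ x hx)) ⟨x₁, hx₁, sub_nonneg.2 hcross.le⟩
  have hbelow' : ∀ s ∈ Icc t₀ t, ∀ y ∈ Icc a b, |U s y| ≤ m s :=
    fun s hs y hy => sub_nonpos.1 (hbelow s hs y hy)
  have hle := hbelow' t ⟨ht.le, le_rfl⟩
  rcases (abs_eq ((abs_nonneg _).trans (hle x hx))).1 (sub_eq_zero.1 htouch) with hpos | hneg
  · obtain ⟨hx0, hxx, hmt⟩ := first_contact_conditions (u := U) hab ht hx (hUx t ht)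
      (hUxx t ht x hx) (hbc t ht) (hUt t ht x hx) (hm' t ht)
      (fun s hs y hy => (le_abs_self _).trans (hbelow' s hs y hy)) hpos
    linarith [(hsuper t ht x hx hle hx0).1 hpos]
  · obtain ⟨hx0, hxx, hmt⟩ := first_contact_conditions (u := fun s y => -U s y)
      (ux := fun y => -Ux t y) hab ht hx (fun y hy => (hUx t ht y hy).neg)
      (hUxx t ht x hx).neg (by simp [hbc t ht]) (hUt t ht x hx).neg (hm' t ht)
      (fun s hs y hy => (neg_le_abs _).trans (hbelow' s hs y hy)) (by simp [hneg])
    linarith [(hsuper t ht x hx hle (neg_eq_zero.1 hx0)).2 hneg]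

lemma abs_integral_mul_le {ν u : ℝ → ℝ} {a b Cν r : ℝ} (hab : a ≤ b) (hν : ∀ y, |ν y| ≤ Cν)
    (hu : ∀ y ∈ Icc a b, |u y| ≤ r) : |∫ y in a..b, ν y * u y| ≤ Cν * r * (b - a) := by
  have := intervalIntegral.norm_integral_le_of_norm_le_const (a := a) (b := b)
    (f := fun y => ν y * u y) (C := Cν * r) fun y hy => by
      rw [uIoc_of_le hab] at hy
      rw [Real.norm_eq_abs, abs_mul]
      exact mul_le_mul (hν y) (hu y (Ioc_subset_Icc_self hy)) (abs_nonneg _)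
        ((abs_nonneg _).trans (hν y))
  rwa [abs_of_nonneg (sub_nonneg.2 hab)] at this

lemma hasDerivAt_exp_barrier (A κ B t : ℝ) :
    HasDerivAt (fun t => A * Real.exp (-κ * t) + B) (-κ * (A * Real.exp (-κ * t))) t := by
  refine ((((hasDerivAt_id t).const_mul (-κ)).exp.const_mul A).add_const B).congr_deriv ?_
  simp only [id, mul_one]
  ring

theorem abs_le_exp_decay_of_contact {U Ut Ux Uxx : ℝ → ℝ → ℝ} {a b κ M A : ℝ} (hab : a < b)
    (hκ : 0 < κ) (hM : 0 ≤ M)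
    (hU : ContinuousOn (fun q : ℝ × ℝ => U q.1 q.2) (Ici 0 ×ˢ Icc a b))
    (hUt : ∀ t > 0, ∀ x ∈ Icc a b, HasDerivAt (fun s => U s x) (Ut t x) t)
    (hUx : ∀ t > 0, ∀ x ∈ Icc a b, HasDerivWithinAt (fun y => U t y) (Ux t x) (Icc a b) x)
    (hUxx : ∀ t > 0, ∀ x ∈ Icc a b, HasDerivWithinAt (fun y => Ux t y) (Uxx t x) (Icc a b) x)
    (hbc : ∀ t > 0, Ux t a = 0 ∧ Ux t b = 0) (h₀ : ∀ x ∈ Icc a b, |U 0 x| ≤ A)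
    (hcontact : ∀ t > 0, ∀ x ∈ Icc a b, ∀ r, (∀ y ∈ Icc a b, |U t y| ≤ r) → Ux t x = 0 →
      (U t x = r → Ut t x - Uxx t x ≤ -κ * r + M) ∧ (U t x = -r → κ * r - M ≤ Ut t x - Uxx t x)) :
    ∀ t ≥ 0, ∀ x ∈ Icc a b, |U t x| ≤ A * Real.exp (-κ * t) + M / κ := by
  intro t ht x hx
  refine le_of_forall_pos_le_add fun δ hδ => ?_
  rw [add_assoc]
  refine abs_le_of_barrier hab hU hUt hUx hUxx hbc (by fun_prop)
    (fun t _ => hasDerivAt_exp_barrier A κ (M / κ + δ) t) (fun y hy => ?_)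
    (fun s hs y hy hle hy0 => ?_) t ht x hx
  · have : 0 < M / κ + δ := add_pos_of_nonneg_of_pos (div_nonneg hM hκ.le) hδ
    simp only [mul_zero, Real.exp_zero, mul_one]
    linarith [h₀ y hy]
  · have hm' : -κ * (A * Real.exp (-κ * s))
        = -κ * (A * Real.exp (-κ * s) + (M / κ + δ)) + M + κ * δ := by
      field_simp; ring
    have hκδ := mul_pos hκ hδ
    obtain ⟨hmax, hmin⟩ := hcontact s hs y hy _ hle hy0
    exact ⟨fun h => by linarith [hmax h], fun h => by linarith [hmin h]⟩

lemma limsup_sSup_abs_le_of_exp_bound {u : ℝ → ℝ → ℝ} {s : Set ℝ} {A κ L : ℝ} (hs : s.Nonempty)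
    (hκ : 0 < κ) (hu : ∀ t ≥ 0, ∀ x ∈ s, |u t x| ≤ A * Real.exp (-κ * t) + L) :
    limsup (fun t => sSup ((fun x => |u t x|) '' s)) atTop ≤ L := by
  have hlim : Tendsto (fun t => A * Real.exp (-κ * t) + L) atTop (𝓝 L) := by
    simpa using ((Real.tendsto_exp_neg_atTop_nhds_zero.comp
      (tendsto_id.const_mul_atTop hκ)).const_mul A).add_const L
  have hsup : ∀ t ≥ 0, sSup ((fun x => |u t x|) '' s) ≤ A * Real.exp (-κ * t) + L :=
    fun t ht => csSup_le (hs.image _) (forall_mem_image.2 (hu t ht))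
  calc limsup (fun t => sSup ((fun x => |u t x|) '' s)) atTop
      ≤ limsup (fun t => A * Real.exp (-κ * t) + L) atTop :=
        limsup_le_limsup (eventually_atTop.2 ⟨0, hsup⟩) (isCoboundedUnder_le_of_le atTop
          fun t => Real.sSup_nonneg fun _ ⟨_, _, hv⟩ => hv ▸ abs_nonneg _) hlim.isBoundedUnder_le
    _ = L := hlim.limsup_eq

theorem stmt11_general
    (f : ℝ → ℝ → ℝ → ℝ → ℝ)
    (ξ M₀ η₀ : ℝ) (hM₀ : 0 < M₀) (hη₀ : 0 < η₀)
    (hdiss₁ : ∀ t : ℝ, ∀ x ∈ Set.Icc (0:ℝ) 1, ∀ w p : ℝ,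
      0 ≤ w → |p| ≤ η₀ → f t x w p ≤ -ξ * w + M₀)
    (hdiss₂ : ∀ t : ℝ, ∀ x ∈ Set.Icc (0:ℝ) 1, ∀ w p : ℝ,
      w ≤ 0 → |p| ≤ η₀ → -ξ * w - M₀ ≤ f t x w p)
    (c : ℝ → ℝ → ℝ) (ν : ℝ → ℝ)
    (normc normν : ℝ) (hcb : ∀ t x, |c t x| ≤ normc) (hνb : ∀ x, |ν x| ≤ normν)
    (ε : ℝ) (hε : 0 ≤ ε) (hsmall : ε * normc * normν < ξ)
    (Mstar : ℝ) (hMstar : Mstar = M₀ / (ξ - ε * normc * normν))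
    (U Ut Ux Uxx : ℝ → ℝ → ℝ)
    (hU_cont : ContinuousOn (fun q : ℝ × ℝ => U q.1 q.2) (Set.Ici 0 ×ˢ Set.Icc 0 1))
    (hUt : ∀ t > (0:ℝ), ∀ x ∈ Set.Icc (0:ℝ) 1, HasDerivAt (fun s => U s x) (Ut t x) t)
    (hUx : ∀ t > (0:ℝ), ∀ x ∈ Set.Icc (0:ℝ) 1,
      HasDerivWithinAt (fun y => U t y) (Ux t x) (Set.Icc 0 1) x)
    (hUxx : ∀ t > (0:ℝ), ∀ x ∈ Set.Icc (0:ℝ) 1,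
      HasDerivWithinAt (fun y => Ux t y) (Uxx t x) (Set.Icc 0 1) x)
    (heq : ∀ t > (0:ℝ), ∀ x ∈ Set.Icc (0:ℝ) 1,
      Ut t x = Uxx t x + f t x (U t x) (Ux t x) +
        ε * c t x * ∫ y in (0:ℝ)..1, ν y * U t y)
    (hbc : ∀ t > (0:ℝ), Ux t 0 = 0 ∧ Ux t 1 = 0) :
    Filter.limsup (fun t => sSup ((fun x => |U t x|) '' Set.Icc (0:ℝ) 1)) Filter.atTop
      ≤ Mstar := by
  have hc0 : 0 ≤ normc := (abs_nonneg _).trans (hcb 0 0)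
  set κ := ξ - ε * normc * normν with hκ_def
  obtain ⟨A, hA⟩ := isCompact_Icc.exists_bound_of_continuousOn (f := fun x => U 0 x)
    (hU_cont.comp (continuous_const.prodMk continuous_id).continuousOn
      fun x hx => ⟨self_mem_Ici, hx⟩)
  have hη : |(0:ℝ)| ≤ η₀ := by simpa using hη₀.le
  rw [hMstar]
  refine limsup_sSup_abs_le_of_exp_bound ⟨0, left_mem_Icc.2 zero_le_one⟩ (sub_pos.2 hsmall)
    (abs_le_exp_decay_of_contact zero_lt_one (sub_pos.2 hsmall) hM₀.le hU_cont hUt hUx hUxx hbc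
      (fun x hx => by simpa using hA x hx) fun t ht x hx r hle hx0 => ?_)
  have hNL : |ε * c t x * ∫ y in (0:ℝ)..1, ν y * U t y| ≤ ε * normc * normν * r := by
    rw [abs_mul, abs_mul, abs_of_nonneg hε, mul_assoc (ε * normc)]
    gcongr
    · exact hcb t x
    · simpa using abs_integral_mul_le zero_le_one hνb hle
  have hκr : κ * r = ξ * r - ε * normc * normν * r := by rw [hκ_def]; ring
  have hr0 : 0 ≤ r := (abs_nonneg _).trans (hle x hx)
  obtain ⟨hNL₁, hNL₂⟩ := abs_le.1 hNL
  rw [heq t ht x hx, hx0]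
  refine ⟨fun hmax => ?_, fun hmin => ?_⟩
  · have hf := hdiss₁ t x hx (U t x) 0 (hmax ▸ hr0) hη
    rw [hmax] at hf ⊢
    linarith
  · have hf := hdiss₂ t x hx (U t x) 0 (by linarith) hη
    rw [hmin] at hf ⊢
    linarith

/-- Ultimate sup-norm bound for classical solutions of the nonlocal parabolic
equation `U_t = U_xx + f(t,x,U,U_x) + ε c(t,x) ∫₀¹ ν U` with Neumann boundary
conditions, under the dissipativity condition on `f`. -/
theorem stmt11
    (f : ℝ → ℝ → ℝ → ℝ → ℝ)
    (hf_cont : Continuous fun q : ℝ × ℝ × ℝ × ℝ => f q.1 q.2.1 q.2.2.1 q.2.2.2)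
    (hf_smooth : ∀ t x, ContDiff ℝ 1 fun q : ℝ × ℝ => f t x q.1 q.2)
    (ξ M₀ η₀ : ℝ) (hξ : 0 < ξ) (hM₀ : 0 < M₀) (hη₀ : 0 < η₀)
    (hdiss₁ : ∀ t : ℝ, ∀ x ∈ Set.Icc (0:ℝ) 1, ∀ w p : ℝ,
      0 ≤ w → |p| ≤ η₀ → f t x w p ≤ -ξ * w + M₀)
    (hdiss₂ : ∀ t : ℝ, ∀ x ∈ Set.Icc (0:ℝ) 1, ∀ w p : ℝ,
      w ≤ 0 → |p| ≤ η₀ → -ξ * w - M₀ ≤ f t x w p)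
    (c : ℝ → ℝ → ℝ) (ν : ℝ → ℝ)
    (hc_cont : Continuous fun q : ℝ × ℝ => c q.1 q.2) (hν_cont : Continuous ν)
    (normc normν : ℝ) (hcb : ∀ t x, |c t x| ≤ normc) (hνb : ∀ x, |ν x| ≤ normν)
    (ε : ℝ) (hε : 0 ≤ ε) (hsmall : ε * normc * normν < ξ)
    (Mstar : ℝ) (hMstar : Mstar = M₀ / (ξ - ε * normc * normν))
    (U Ut Ux Uxx : ℝ → ℝ → ℝ)
    (hU_cont : ContinuousOn (fun q : ℝ × ℝ => U q.1 q.2) (Set.Ici 0 ×ˢ Set.Icc 0 1))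
    (hUt : ∀ t > (0:ℝ), ∀ x ∈ Set.Icc (0:ℝ) 1, HasDerivAt (fun s => U s x) (Ut t x) t)
    (hUx : ∀ t > (0:ℝ), ∀ x ∈ Set.Icc (0:ℝ) 1,
      HasDerivWithinAt (fun y => U t y) (Ux t x) (Set.Icc 0 1) x)
    (hUxx : ∀ t > (0:ℝ), ∀ x ∈ Set.Icc (0:ℝ) 1,
      HasDerivWithinAt (fun y => Ux t y) (Uxx t x) (Set.Icc 0 1) x)
    (hderiv_cont : ContinuousOn
      (fun q : ℝ × ℝ => (Ut q.1 q.2, Ux q.1 q.2, Uxx q.1 q.2)) (Set.Ioi 0 ×ˢ Set.Icc 0 1))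
    (heq : ∀ t > (0:ℝ), ∀ x ∈ Set.Icc (0:ℝ) 1,
      Ut t x = Uxx t x + f t x (U t x) (Ux t x) +
        ε * c t x * ∫ y in (0:ℝ)..1, ν y * U t y)
    (hbc : ∀ t > (0:ℝ), Ux t 0 = 0 ∧ Ux t 1 = 0) :
    Filter.limsup (fun t => sSup ((fun x => |U t x|) '' Set.Icc (0:ℝ) 1)) Filter.atTop
      ≤ Mstar :=
  stmt11_general f ξ M₀ η₀ hM₀ hη₀ hdiss₁ hdiss₂ c ν normc normν hcb hνb ε hε hsmall Mstar hMstar U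
    Ut Ux Uxx hU_cont hUt hUx hUxx heq hbc
end

section
/- Let n ≥ 2 and let f₁, …, f_n be continuous real-valued functions (f₁ and f_n of (t, a, b) ∈ ℝ × ℝ × ℝ, and f_i for 2 ≤ i ≤ n−1 of (t, a, b, c) ∈ ℝ × ℝ³, where b denotes the i-th coordinate and a, c its neighbors). Assume there exist δ, C > 0 such that for all t ∈ ℝ: f_i ≤ −δ whenever its middle argument b satisfies b ≥ C and each neighbor argument has absolute value at most b, and f_i ≥ δ whenever b ≤ −C and each neighbor argument has absolute value at most −b. Let g₁, …, g_n : ℝ × ℝⁿ → ℝ be continuous with |g_i(t,x)| ≤ M_g for all (t,x), and let ε ∈ ℝ with |ε| < δ/M_g. Suppose x : [0,∞) → ℝⁿ is differentiable and satisfies ẋ₁(t) = f₁(t, x₁(t), x₂(t)) + ε g₁(t, x(t)), ẋ_i(t) = f_i(t, x_{i−1}(t), x_i(t), x_{i+1}(t)) + ε g_i(t, x(t)) for 2 ≤ i ≤ n−1, and ẋ_n(t) = f_n(t, x_{n−1}(t), x_n(t)) + ε g_n(t, x(t)) for all t ≥ 0. Then: (i) there exists T ≥ 0 such that |x_i(t)|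 ≤ C for all t ≥ T and all 1 ≤ i ≤ n; and (ii) if max_i |x_i(t₀)| ≤ C for some t₀ ≥ 0, then max_i |x_i(t)| ≤ C for all t ≥ t₀. -/
/-!
The sup norm `V t = ‖x t‖` is a Lyapunov function. When `V ≥ C`, a coordinate attaining the
maximum equals `±V` and dominates its neighbours in absolute value, so the dissipativity
condition pushes it inward at rate at least `η = δ - |ε| M_g > 0`; hence the right Dini
derivative of `V` is at most `-η` there. Comparing `V` with the constant `C` shows that the box
is invariant, and comparing it with the line `V 0 - η s / 2` shows that it is reached by
time `2 (V 0 - C) / η`.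
-/

open Set Filter Topology

/-- `K` bounds the lower right Dini derivative of `f` at `x`: `liminf_{z → x⁺} slope f x z ≤ K`. -/
def LiminfSlopeRightLE (f : ℝ → ℝ) (x K : ℝ) : Prop :=
  ∀ r, K < r → ∃ᶠ z in 𝓝[>] x, slope f x z < r

theorem tendsto_inv_sub_nhdsGT (t : ℝ) : Tendsto (fun z => (z - t)⁻¹) (𝓝[>] t) atTop := by
  refine Tendsto.inv_tendsto_nhdsGT_zero (tendsto_nhdsWithin_iff.2 ⟨?_, ?_⟩)
  · simpa using ((continuous_sub_right t).tendsto t).mono_left nhdsWithin_le_nhds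
  · exact eventually_mem_nhdsWithin.mono fun z hz => show 0 < z - t from sub_pos.2 hz

theorem eventually_div_sub_lt_of_hasDerivWithinAt {u : ℝ → ℝ} {d t M r : ℝ}
    (hu : HasDerivWithinAt u d (Ioi t) t) (hM : u t ≤ M) (hr : u t = M → d < r) :
    ∀ᶠ z in 𝓝[>] t, (u z - M) / (z - t) < r := by
  rcases hM.eq_or_lt with rfl | hlt
  · have hslope := (hasDerivWithinAt_iff_tendsto_slope' (lt_irrefl t)).1 hu
    filter_upwards [hslope.eventually_lt_const (hr rfl)] with z hz
    rwa [slope_def_field] at hz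
  · have hcont : Tendsto (fun z => u z - M) (𝓝[>] t) (𝓝 (u t - M)) :=
      hu.continuousWithinAt.tendsto.sub_const M
    exact (hcont.neg_mul_atTop (sub_neg.2 hlt) (tendsto_inv_sub_nhdsGT t)).eventually_lt_atBot r

theorem exists_abs_eq_pi_norm {ι : Type*} [Fintype ι] [Nonempty ι] (y : ι → ℝ) :
    ∃ i, |y i| = ‖y‖ := by
  obtain ⟨i, -, hi⟩ := Finset.exists_mem_eq_sup Finset.univ Finset.univ_nonempty fun b => ‖y b‖₊
  exact ⟨i, by rw [Pi.norm_def, hi]; rfl⟩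

section PiNorm

variable {ι : Type*} [Fintype ι] [Nonempty ι] {x : ℝ → ι → ℝ} {d : ι → ℝ} {t : ℝ}

theorem liminfSlopeRightLE_pi_norm {K : ℝ}
    (hx : ∀ i, HasDerivWithinAt (fun s => x s i) (d i) (Ioi t) t)
    (hK : ∀ i, (x t i = ‖x t‖ → d i ≤ K) ∧ (-x t i = ‖x t‖ → -d i ≤ K)) :
    LiminfSlopeRightLE (fun s => ‖x s‖) t K := by
  intro r hr
  have hle : ∀ i, |x t i| ≤ ‖x t‖ := norm_le_pi_norm (x t)
  have hcoord : ∀ᶠ z in 𝓝[>] t, ∀ i,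
      (x z i - ‖x t‖) / (z - t) < r ∧ (-x z i - ‖x t‖) / (z - t) < r :=
    eventually_all.2 fun i =>
      (eventually_div_sub_lt_of_hasDerivWithinAt (hx i) ((le_abs_self _).trans (hle i))
        fun h => ((hK i).1 h).trans_lt hr).and
      (eventually_div_sub_lt_of_hasDerivWithinAt (hx i).neg ((neg_le_abs _).trans (hle i))
        fun h => ((hK i).2 h).trans_lt hr)
  refine Eventually.frequently ?_
  filter_upwards [hcoord] with z hz
  obtain ⟨i, hi⟩ := exists_abs_eq_pi_norm (x z)
  rw [slope_def_field, ← hi]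
  rcases abs_choice (x z i) with h | h <;> rw [h]
  exacts [(hz i).1, (hz i).2]

theorem liminfSlopeRightLE_pi_norm_sum_abs
    (hx : ∀ i, HasDerivWithinAt (fun s => x s i) (d i) (Ioi t) t) :
    LiminfSlopeRightLE (fun s => ‖x s‖) t (∑ i, |d i|) := by
  have hd : ∀ i, |d i| ≤ ∑ j, |d j| := fun i =>
    Finset.single_le_sum (fun j _ => abs_nonneg (d j)) (Finset.mem_univ i)
  exact liminfSlopeRightLE_pi_norm hx fun i =>
    ⟨fun _ => (le_abs_self _).trans (hd i), fun _ => (neg_le_abs _).trans (hd i)⟩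

theorem liminfSlopeRightLE_pi_norm_of_inward {C η : ℝ}
    (hx : ∀ i, HasDerivWithinAt (fun s => x s i) (d i) (Ioi t) t) (hC : C ≤ ‖x t‖)
    (htop : ∀ i, C ≤ x t i → (∀ j, |x t j| ≤ x t i) → d i ≤ -η)
    (hbot : ∀ i, x t i ≤ -C → (∀ j, |x t j| ≤ -x t i) → η ≤ d i) :
    LiminfSlopeRightLE (fun s => ‖x s‖) t (-η) := by
  have hle : ∀ j, |x t j| ≤ ‖x t‖ := norm_le_pi_norm (x t)
  refine liminfSlopeRightLE_pi_norm hx fun i => ⟨fun hi => ?_, fun hi => ?_⟩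
  · exact htop i (hi ▸ hC) (hi ▸ hle)
  · exact neg_le_neg (hbot i (by linarith) (hi ▸ hle))

end PiNorm

section Dissipative

variable {V f' : ℝ → ℝ} {C η : ℝ}

theorem exists_liminfSlopeRightLE_eq_of_ge
    (hfin : ∀ s ≥ 0, ∃ K, LiminfSlopeRightLE V s K)
    (hdecay : ∀ s ≥ 0, C ≤ V s → LiminfSlopeRightLE V s (-η)) :
    ∃ f' : ℝ → ℝ, (∀ s ≥ 0, LiminfSlopeRightLE V s (f' s)) ∧ ∀ s ≥ 0, C ≤ V s → f' s = -η := by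
  choose! K hK using hfin
  refine ⟨fun s => if C ≤ V s then -η else K s, fun s hs => ?_, fun s _ hs => if_pos hs⟩
  dsimp only
  split_ifs with h
  exacts [hdecay s hs h, hK s hs]

theorem le_of_liminfSlopeRightLE_of_ge (hη : 0 < η) (hV : ContinuousOn V (Ici 0))
    (hf' : ∀ s ≥ 0, LiminfSlopeRightLE V s (f' s)) (hdecay : ∀ s ≥ 0, C ≤ V s → f' s = -η)
    ⦃t₀ t : ℝ⦄ (ht₀ : 0 ≤ t₀) (h₀ : V t₀ ≤ C) (ht : t₀ ≤ t) : V t ≤ C :=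
  image_le_of_liminf_slope_right_lt_deriv_boundary' (B := fun _ => C) (B' := fun _ => 0)
    (hV.mono fun _ hs => ht₀.trans hs.1) (fun s hs => hf' s (ht₀.trans hs.1)) h₀
    continuousOn_const (fun _ _ => hasDerivWithinAt_const _ _ _)
    (fun s hs hVs => by rw [hdecay s (ht₀.trans hs.1) hVs.ge]; linarith) ⟨ht, le_rfl⟩

theorem exists_le_of_liminfSlopeRightLE_of_ge (hη : 0 < η) (hV : ContinuousOn V (Ici 0))
    (hf' : ∀ s ≥ 0, LiminfSlopeRightLE V s (f' s)) (hdecay : ∀ s ≥ 0, C ≤ V s → f' s = -η) :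
    ∃ T ≥ 0, V T ≤ C := by
  rcases le_or_gt (V 0) C with h0 | h0
  · exact ⟨0, le_rfl, h0⟩
  -- `V` stays below the line `V 0 - η s / 2`, which reaches `C` at `T`
  set T := 2 * (V 0 - C) / η with hT
  have hT0 : 0 ≤ T := div_nonneg (by linarith) hη.le
  have hηT : η / 2 * T = V 0 - C := by rw [hT]; field_simp
  have hline := image_le_of_liminf_slope_right_lt_deriv_boundary' (a := 0) (b := T)
    (B := fun s => V 0 - η / 2 * s) (B' := fun _ => -(η / 2)) (hV.mono Icc_subset_Ici_self)
    (fun s hs => hf' s hs.1) (by simp) (by fun_prop)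
    (fun s _ => by simpa using ((hasDerivWithinAt_id s (Ici s)).const_mul (η / 2)).const_sub (V 0))
    (fun s hs hVs => by
      have := mul_lt_mul_of_pos_left hs.2 (half_pos hη)
      rw [hdecay s hs.1 (by linarith)]
      linarith)
    (right_mem_Icc.2 hT0)
  exact ⟨T, hT0, by linarith⟩

end Dissipative

theorem tridiagonal_exists_hasDerivWithinAt_inward (n : ℕ) (hn : 1 < n)
    (f1 fn : ℝ → ℝ → ℝ → ℝ) (fm : ℕ → ℝ → ℝ → ℝ → ℝ → ℝ) (δ C : ℝ)
    (hf1 : ∀ t b c : ℝ, (C ≤ b → |c| ≤ b → f1 t b c ≤ -δ) ∧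
      (b ≤ -C → |c| ≤ -b → δ ≤ f1 t b c))
    (hfn : ∀ t a b : ℝ, (C ≤ b → |a| ≤ b → fn t a b ≤ -δ) ∧
      (b ≤ -C → |a| ≤ -b → δ ≤ fn t a b))
    (hfm : ∀ i : ℕ, 1 ≤ i → i + 1 < n → ∀ t a b c : ℝ,
      (C ≤ b → |a| ≤ b → |c| ≤ b → fm i t a b c ≤ -δ) ∧
      (b ≤ -C → |a| ≤ -b → |c| ≤ -b → δ ≤ fm i t a b c))
    (g : Fin n → ℝ → (Fin n → ℝ) → ℝ) (Mg : ℝ) (hgb : ∀ i t x, |g i t x| ≤ Mg) (ε : ℝ)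
    (x : ℝ → Fin n → ℝ)
    (hx0 : ∀ t ≥ (0:ℝ), HasDerivWithinAt (fun s => x s ⟨0, hn.pos⟩)
      (f1 t (x t ⟨0, hn.pos⟩) (x t ⟨1, hn⟩) + ε * g ⟨0, hn.pos⟩ t (x t)) (Ici 0) t)
    (hxm : ∀ t ≥ (0:ℝ), ∀ i : Fin n, ∀ _h1 : 1 ≤ i.val, ∀ h2 : i.val + 1 < n,
      HasDerivWithinAt (fun s => x s i)
        (fm i.val t (x t ⟨i.val - 1, (Nat.sub_le _ _).trans_lt i.isLt⟩) (x t i)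
          (x t ⟨i.val + 1, h2⟩) + ε * g i t (x t)) (Ici 0) t)
    (hxn : ∀ t ≥ (0:ℝ), HasDerivWithinAt (fun s => x s ⟨n - 1, Nat.sub_one_lt_of_lt hn⟩)
      (fn t (x t ⟨n - 2, Nat.sub_lt hn.pos two_pos⟩) (x t ⟨n - 1, Nat.sub_one_lt_of_lt hn⟩) +
        ε * g ⟨n - 1, Nat.sub_one_lt_of_lt hn⟩ t (x t)) (Ici 0) t)
    {t : ℝ} (ht : 0 ≤ t) (i : Fin n) :
    ∃ D, HasDerivWithinAt (fun s => x s i) D (Ici 0) t ∧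
      (C ≤ x t i → (∀ j, |x t j| ≤ x t i) → D ≤ -(δ - |ε| * Mg)) ∧
      (x t i ≤ -C → (∀ j, |x t j| ≤ -x t i) → δ - |ε| * Mg ≤ D) := by
  have hpert : ∀ j, |ε * g j t (x t)| ≤ |ε| * Mg := fun j => by
    rw [abs_mul]; exact mul_le_mul_of_nonneg_left (hgb j t (x t)) (abs_nonneg ε)
  rcases i with ⟨i, hi⟩
  obtain rfl | hi0 := Nat.eq_zero_or_pos i
  · have hf := hf1 t (x t ⟨0, by omega⟩) (x t ⟨1, by omega⟩)
    have hp := abs_le.1 (hpert ⟨0, by omega⟩)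
    exact ⟨_, hx0 t ht, fun h₁ h₂ => by linarith [hf.1 h₁ (h₂ _)],
      fun h₁ h₂ => by linarith [hf.2 h₁ (h₂ _)]⟩
  obtain rfl | hin := eq_or_ne i (n - 1)
  · have hf := hfn t (x t ⟨n - 2, by omega⟩) (x t ⟨n - 1, by omega⟩)
    have hp := abs_le.1 (hpert ⟨n - 1, by omega⟩)
    exact ⟨_, hxn t ht, fun h₁ h₂ => by linarith [hf.1 h₁ (h₂ _)],
      fun h₁ h₂ => by linarith [hf.2 h₁ (h₂ _)]⟩
  · have hi1 : i + 1 < n := by omega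
    have hf := hfm i hi0 hi1 t (x t ⟨i - 1, by omega⟩) (x t ⟨i, hi⟩) (x t ⟨i + 1, by omega⟩)
    have hp := abs_le.1 (hpert ⟨i, hi⟩)
    exact ⟨_, hxm t ht ⟨i, hi⟩ hi0 hi1, fun h₁ h₂ => by linarith [hf.1 h₁ (h₂ _) (h₂ _)],
      fun h₁ h₂ => by linarith [hf.2 h₁ (h₂ _) (h₂ _)]⟩

/-- Indices are 0-based: `f1` governs the first coordinate, `fn` the last, and `fm i` the
interior coordinates. -/
theorem stmt13 (n : ℕ) (hn : 2 ≤ n)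
    (f1 fn : ℝ → ℝ → ℝ → ℝ) (fm : ℕ → ℝ → ℝ → ℝ → ℝ → ℝ)
    (δ C : ℝ)
    (hf1 : ∀ t b c : ℝ, (C ≤ b → |c| ≤ b → f1 t b c ≤ -δ) ∧
      (b ≤ -C → |c| ≤ -b → δ ≤ f1 t b c))
    (hfn : ∀ t a b : ℝ, (C ≤ b → |a| ≤ b → fn t a b ≤ -δ) ∧
      (b ≤ -C → |a| ≤ -b → δ ≤ fn t a b))
    (hfm : ∀ i : ℕ, 1 ≤ i → i + 1 < n → ∀ t a b c : ℝ,
      (C ≤ b → |a| ≤ b → |c| ≤ b → fm i t a b c ≤ -δ) ∧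
      (b ≤ -C → |a| ≤ -b → |c| ≤ -b → δ ≤ fm i t a b c))
    (g : Fin n → ℝ → (Fin n → ℝ) → ℝ)
    (Mg : ℝ) (hMg : 0 < Mg) (hgb : ∀ i t x, |g i t x| ≤ Mg)
    (ε : ℝ) (hε : |ε| < δ / Mg)
    (x : ℝ → Fin n → ℝ)
    (hx0 : ∀ t ≥ (0:ℝ), HasDerivWithinAt (fun s => x s ⟨0, by omega⟩)
      (f1 t (x t ⟨0, by omega⟩) (x t ⟨1, by omega⟩) + ε * g ⟨0, by omega⟩ t (x t))
      (Set.Ici 0) t)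
    (hxm : ∀ t ≥ (0:ℝ), ∀ i : Fin n, ∀ _h1 : 1 ≤ i.val, ∀ _h2 : i.val + 1 < n,
      HasDerivWithinAt (fun s => x s i)
        (fm i.val t (x t ⟨i.val - 1, by omega⟩) (x t i) (x t ⟨i.val + 1, by omega⟩) +
          ε * g i t (x t)) (Set.Ici 0) t)
    (hxn : ∀ t ≥ (0:ℝ), HasDerivWithinAt (fun s => x s ⟨n - 1, by omega⟩)
      (fn t (x t ⟨n - 2, by omega⟩) (x t ⟨n - 1, by omega⟩) +
        ε * g ⟨n - 1, by omega⟩ t (x t)) (Set.Ici 0) t) :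
    (∃ T ≥ (0:ℝ), ∀ t ≥ T, ∀ i, |x t i| ≤ C) ∧
    (∀ t₀ ≥ (0:ℝ), (∀ i, |x t₀ i| ≤ C) → ∀ t ≥ t₀, ∀ i, |x t i| ≤ C) := by
  have hη : 0 < δ - |ε| * Mg := by linarith [(lt_div_iff₀ hMg).1 hε]
  choose! d hd hd_top hd_bot using fun t (ht : 0 ≤ t) =>
    tridiagonal_exists_hasDerivWithinAt_inward n hn f1 fn fm δ C hf1 hfn hfm g Mg hgb ε x
      hx0 hxm hxn ht
  have : Nonempty (Fin n) := ⟨⟨0, by omega⟩⟩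
  have hd_right : ∀ t ≥ (0:ℝ), ∀ i, HasDerivWithinAt (fun s => x s i) (d t i) (Ioi t) t :=
    fun t ht i => (hd t ht i).mono (Ioi_subset_Ici ht)
  have hV : ContinuousOn (fun t => ‖x t‖) (Ici 0) :=
    (continuousOn_pi.2 fun i t ht => (hd t ht i).continuousWithinAt).norm
  obtain ⟨f', hf', hf'_decay⟩ := exists_liminfSlopeRightLE_eq_of_ge (V := fun t => ‖x t‖)
    (fun t ht => ⟨_, liminfSlopeRightLE_pi_norm_sum_abs (hd_right t ht)⟩)
    (fun t ht hC => liminfSlopeRightLE_pi_norm_of_inward (hd_right t ht) hC (hd_top t ht)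
      (hd_bot t ht))
  have hinv := le_of_liminfSlopeRightLE_of_ge hη hV hf' hf'_decay
  refine ⟨?_, fun t₀ ht₀ h₀ t ht i => ?_⟩
  · obtain ⟨T, hT, hTC⟩ := exists_le_of_liminfSlopeRightLE_of_ge hη hV hf' hf'_decay
    exact ⟨T, hT, fun t ht i => (norm_le_pi_norm (x t) i).trans (hinv hT hTC ht)⟩
  · exact (norm_le_pi_norm (x t) i).trans (hinv ht₀ ((pi_norm_le_iff_of_nonempty _).2 h₀) ht)
end

section
/- Let m be a natural number and let a₀, a₁, …, a_m be real numbers, not all zero. Then the function w : [0,1] → ℝ defined by w(x) = Σ_{k=0}^{m} a_k cos(kπx) has at most m zeros in [0,1]; that is, the cardinality of {x ∈ [0,1] : w(x) = 0} is at most m. -/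
/-!
Substituting `t = cos (π x)` turns `∑ a_k cos (k π x)` into `∑ a_k T_k(t)`, a polynomial in `t`
of degree at most `m` (the Chebyshev polynomial `T_k` has degree `k`), which is nonzero because its
coefficient at the largest `k` with `a_k ≠ 0` is `2^(k-1) a_k`. Since `x ↦ cos (π x)` is injective
on `[0,1]`, distinct zeros of the cosine sum give distinct roots of this polynomial.
-/

open Polynomial Polynomial.Chebyshev

theorem Polynomial.encard_setOf_isRoot_comp_le {R α : Type*} [CommRing R] [IsDomain R]
    {p : R[X]} (hp : p ≠ 0) {f : α → R} {s : Set α} (hf : Set.InjOn f s) :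
    {x ∈ s | p.IsRoot (f x)}.encard ≤ p.natDegree := by
  classical
  have hroots : f '' {x ∈ s | p.IsRoot (f x)} ⊆ (p.roots.toFinset : Set R) := by
    rintro _ ⟨x, hx, rfl⟩
    simpa [mem_roots hp] using hx.2
  calc {x ∈ s | p.IsRoot (f x)}.encard
      = (f '' {x ∈ s | p.IsRoot (f x)}).encard :=
        ((hf.mono fun _ hx => hx.1).encard_image).symm
    _ ≤ (p.roots.toFinset : Set R).encard := Set.encard_le_encard hroots
    _ ≤ p.natDegree := by
        rw [Set.encard_coe_eq_coe_finsetCard]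
        exact_mod_cast (Multiset.toFinset_card_le _).trans (card_roots' p)

namespace Polynomial.Chebyshev

variable {R : Type*} [CommRing R] [IsDomain R] [NeZero (2 : R)]

theorem natDegree_sum_smul_T_le (m : ℕ) (a : ℕ → R) :
    (∑ k ∈ Finset.range (m + 1), a k • T R k).natDegree ≤ m := by
  refine natDegree_sum_le_of_forall_le _ _ fun k hk => ?_
  refine (natDegree_smul_le _ _).trans ?_
  simpa [Nat.lt_succ_iff] using hk

theorem coeff_T_natCast_self (n : ℕ) : (T R n).coeff n = 2 ^ (n - 1) := by
  simpa only [leadingCoeff, natDegree_T, Int.natAbs_natCast] using leadingCoeff_T R n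

theorem sum_smul_T_ne_zero {m : ℕ} {a : ℕ → R} (ha : ∃ k ≤ m, a k ≠ 0) :
    ∑ k ∈ Finset.range (m + 1), a k • T R k ≠ 0 := by
  induction m with
  | zero =>
    obtain ⟨k, hk, hak⟩ := ha
    obtain rfl : k = 0 := by omega
    simpa using hak
  | succ n ih =>
    rw [Finset.sum_range_succ]
    by_cases hlast : a (n + 1) = 0
    · obtain ⟨k, hk, hak⟩ := ha
      have hkn : k ≤ n := Nat.le_of_lt_succ (hk.lt_of_ne (by rintro rfl; exact hak hlast))
      simpa [hlast] using ih ⟨k, hkn, hak⟩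
    · have hlow : (∑ k ∈ Finset.range (n + 1), a k • T R k).coeff (n + 1) = 0 :=
        coeff_eq_zero_of_natDegree_lt ((natDegree_sum_smul_T_le n a).trans_lt n.lt_succ_self)
      intro h
      have htop := congrArg (coeff · (n + 1)) h
      simp only [coeff_add, hlow, coeff_smul, coeff_T_natCast_self, smul_eq_mul, zero_add,
        coeff_zero] at htop
      exact mul_ne_zero hlast (pow_ne_zero _ two_ne_zero) htop

end Polynomial.Chebyshev

theorem Polynomial.Chebyshev.eval_cos_sum_smul_T (m : ℕ) (a : ℕ → ℝ) (θ : ℝ) :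
    (∑ k ∈ Finset.range (m + 1), a k • T ℝ k).eval (Real.cos θ)
      = ∑ k ∈ Finset.range (m + 1), a k * Real.cos (k * θ) := by
  simp [eval_finsetSum, T_real_cos]

theorem Real.injOn_cos_pi_mul : Set.InjOn (fun x => cos (Real.pi * x)) (Set.Icc 0 1) := by
  refine fun x hx y hy hxy => mul_left_cancel₀ pi_ne_zero (injOn_cos ?_ ?_ hxy) <;>
    exact ⟨by nlinarith [pi_pos, hx.1, hy.1], by nlinarith [pi_pos, hx.2, hy.2]⟩

/-- A nonzero cosine polynomial of degree at most `m` has at most `m` zeros in `[0,1]`. -/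
theorem stmt14 (m : ℕ) (a : ℕ → ℝ) (ha : ∃ k ≤ m, a k ≠ 0) :
    Set.encard {x ∈ Set.Icc (0:ℝ) 1 |
        (∑ k ∈ Finset.range (m + 1), a k * Real.cos (k * Real.pi * x)) = 0}
      ≤ (m : ℕ∞) := by
  set P : ℝ[X] := ∑ k ∈ Finset.range (m + 1), a k • T ℝ k
  have hzeros : {x ∈ Set.Icc (0:ℝ) 1 |
      (∑ k ∈ Finset.range (m + 1), a k * Real.cos (k * Real.pi * x)) = 0}
        = {x ∈ Set.Icc (0:ℝ) 1 | P.IsRoot (Real.cos (Real.pi * x))} := by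
    ext x
    simp only [Set.mem_ofPred_eq, IsRoot, P, eval_cos_sum_smul_T, mul_assoc]
  rw [hzeros]
  calc _ ≤ (P.natDegree : ℕ∞) :=
        encard_setOf_isRoot_comp_le (sum_smul_T_ne_zero ha) Real.injOn_cos_pi_mul
    _ ≤ m := by exact_mod_cast natDegree_sum_smul_T_le m a
end

section
/- Let X be a real Banach space, Θ a compact metric space, and σ : ℝ × Θ → Θ a continuous flow (σ(0,θ) = θ and σ(s+t,θ) = σ(s, σ(t,θ))). Let 𝓗 ⊆ X be a closed subspace admitting a closed complement 𝓗' of finite dimension d (X = 𝓗' ⊕ 𝓗), and let p : X → 𝓗' be the continuous linear projection onto 𝓗' along 𝓗. Let E ⊆ X × Θ be compact and let Λ : ℝ × E → E be a continuous flow of skew-product form Λ_t(x,θ) = (φ(t,x,θ), σ(t,θ)) (Λ₀ = id, Λ_{s+t} = Λ_s ∘ Λ_t). Assume that for any two distinct points (x,θ), (y,θ) ∈ E lying over the same θ, one has φ(t,x,θ) − φ(t,y,θ) ∉ 𝓗 for every t ∈ ℝ. Then the map h : E → 𝓗' × Θ, h(x,θ) = (p(x), θ), is a homeomorphism of E onto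 its image Ê = h(E), and there exists a continuous flow Λ̂ : ℝ × Ê → Ê of skew-product form over σ (the Θ-component of Λ̂_t(w,θ) is σ(t,θ)) such that h(Λ_t(x,θ)) = Λ̂_t(h(x,θ)) for all t ∈ ℝ and (x,θ) ∈ E. -/
/-!
At `t = 0` the transversality hypothesis says that `p` is injective on every fibre
`{x | (x, θ) ∈ E}`, so `(x, θ) ↦ (p x, θ)` is a continuous injection of the compact set `E`
into a Hausdorff space, hence a homeomorphism onto its image. Transporting `Λ` along it gives
the flow on the image; it is again a skew product over `σ` because the homeomorphism does not
move the base point.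
-/

open Set Function

theorem LinearMap.ker_eq_of_isCompl {R M : Type*} [Ring R] [AddCommGroup M] [Module R M]
    {p : M →ₗ[R] M} {H H' : Submodule R M} (hcompl : IsCompl H' H)
    (hH' : ∀ x ∈ H', p x = x) (hH : ∀ x ∈ H, p x = 0) : LinearMap.ker p = H := by
  refine le_antisymm (fun z hz => ?_) hH
  have hz' : z ∈ H' ⊔ H := hcompl.sup_eq_top ▸ Submodule.mem_top
  obtain ⟨a, ha, b, hb, rfl⟩ := Submodule.mem_sup.mp hz'
  have ha0 : a = 0 := by
    simpa [hH' a ha, hH b hb] using LinearMap.mem_ker.mp hz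
  simpa [ha0] using hb

section Homeomorph

variable {α β : Type*} [TopologicalSpace α] [TopologicalSpace β] [T2Space β]
  {f : α → β} {s : Set α}

noncomputable def IsCompact.homeomorphImage (hs : IsCompact s) (hf : ContinuousOn f s)
    (hinj : InjOn f s) : s ≃ₜ f '' s :=
  haveI := isCompact_iff_compactSpace.mp hs
  Continuous.homeoOfEquivCompactToT2 (f := Equiv.Set.imageOfInjOn f s hinj)
    (hf.domRestrict.subtype_mk _)

@[simp]
theorem IsCompact.coe_homeomorphImage_apply (hs : IsCompact s) (hf : ContinuousOn f s)
    (hinj : InjOn f s) (x : s) : (hs.homeomorphImage hf hinj x : β) = f x :=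
  rfl

theorem IsCompact.continuousOn_of_rightInvOn (hs : IsCompact s) (hf : ContinuousOn f s)
    (hinj : InjOn f s) {g : β → α} (hgs : MapsTo g (f '' s) s)
    (hfg : RightInvOn g f (f '' s)) : ContinuousOn g (f '' s) := by
  set e := hs.homeomorphImage hf hinj
  have hg : (f '' s).domRestrict g = fun y => (e.symm y : α) := by
    funext y
    rw [e.symm_apply_eq (x := ⟨g y, hgs y.2⟩) |>.mpr (Subtype.ext (hfg y.2).symm)]
    rfl
  rw [continuousOn_iff_continuous_domRestrict, hg]
  exact continuous_subtype_val.comp e.symm.continuous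

end Homeomorph

section SkewProduct

variable {X Y Θ : Type*} {f : X → Y} {E : Set (X × Θ)}

structure IsSkewProductFlow [TopologicalSpace X] [TopologicalSpace Θ] (σ : ℝ → Θ → Θ)
    (φ : ℝ → X → Θ → X) (E : Set (X × Θ)) : Prop where
  continuousOn : ContinuousOn (fun q : ℝ × X × Θ => φ q.1 q.2.1 q.2.2) {q | q.2 ∈ E}
  mapsTo : ∀ t : ℝ, ∀ q ∈ E, (φ t q.1 q.2, σ t q.2) ∈ E
  zero : ∀ q ∈ E, φ 0 q.1 q.2 = q.1
  add : ∀ s t : ℝ, ∀ q ∈ E, φ (s + t) q.1 q.2 = φ s (φ t q.1 q.2) (σ t q.2)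

theorem injOn_prodMap_id (hinj : ∀ θ, InjOn f {x | (x, θ) ∈ E}) :
    InjOn (Prod.map f id) E := by
  rintro ⟨x, θ⟩ hx ⟨y, θ'⟩ hy hxy
  obtain ⟨hf, rfl : θ = θ'⟩ := Prod.ext_iff.mp hxy
  rw [hinj θ hx hy hf]

variable [Nonempty X]

noncomputable def fiberwiseInvFun (f : X → Y) (E : Set (X × Θ)) (y : Y) (θ : Θ) : X :=
  invFunOn f {x | (x, θ) ∈ E} y

theorem fiberwiseInvFun_apply_self (hinj : ∀ θ, InjOn f {x | (x, θ) ∈ E}) {q : X × Θ}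
    (hq : q ∈ E) : fiberwiseInvFun f E (f q.1) q.2 = q.1 :=
  (hinj q.2).leftInvOn_invFunOn hq

theorem fiberwiseInvFun_spec {w : Y × Θ} (hw : w ∈ Prod.map f id '' E) :
    (fiberwiseInvFun f E w.1 w.2, w.2) ∈ E ∧ f (fiberwiseInvFun f E w.1 w.2) = w.1 := by
  obtain ⟨q, hq, rfl⟩ := hw
  exact invFunOn_pos (s := {x | (x, q.2) ∈ E}) ⟨q.1, hq, rfl⟩

noncomputable def pushforwardSkewFlow (f : X → Y) (E : Set (X × Θ))
    (φ : ℝ → X → Θ → X) : ℝ → Y → Θ → Y :=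
  fun t y θ => f (φ t (fiberwiseInvFun f E y θ) θ)

theorem pushforwardSkewFlow_apply (φ : ℝ → X → Θ → X)
    (hinj : ∀ θ, InjOn f {x | (x, θ) ∈ E}) (t : ℝ) {q : X × Θ} (hq : q ∈ E) :
    pushforwardSkewFlow f E φ t (f q.1) q.2 = f (φ t q.1 q.2) := by
  rw [pushforwardSkewFlow, fiberwiseInvFun_apply_self hinj hq]

variable [TopologicalSpace X] [TopologicalSpace Y] [TopologicalSpace Θ] [T2Space Y] [T2Space Θ]

theorem continuousOn_fiberwiseInvFun (hE : IsCompact E) (hf : Continuous f)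
    (hinj : ∀ θ, InjOn f {x | (x, θ) ∈ E}) :
    ContinuousOn (fun w : Y × Θ => (fiberwiseInvFun f E w.1 w.2, w.2)) (Prod.map f id '' E) :=
  hE.continuousOn_of_rightInvOn (hf.prodMap continuous_id).continuousOn (injOn_prodMap_id hinj)
    (fun _ hw => (fiberwiseInvFun_spec hw).1)
    (fun _ hw => Prod.ext (fiberwiseInvFun_spec hw).2 rfl)

theorem IsSkewProductFlow.pushforward {σ : ℝ → Θ → Θ} {φ : ℝ → X → Θ → X}
    (hΛ : IsSkewProductFlow σ φ E) (hE : IsCompact E) (hf : Continuous f)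
    (hinj : ∀ θ, InjOn f {x | (x, θ) ∈ E}) :
    IsSkewProductFlow σ (pushforwardSkewFlow f E φ) (Prod.map f id '' E) where
  continuousOn := by
    have hlift : ContinuousOn
        (fun q : ℝ × Y × Θ => (q.1, fiberwiseInvFun f E q.2.1 q.2.2, q.2.2))
        {q | q.2 ∈ Prod.map f id '' E} :=
      continuousOn_fst.prodMk
        ((continuousOn_fiberwiseInvFun hE hf hinj).comp continuousOn_snd fun _ hq => hq)
    exact hf.comp_continuousOn
      (hΛ.continuousOn.comp hlift fun _ hq => (fiberwiseInvFun_spec hq).1)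
  mapsTo := by
    rintro t _ ⟨q, hq, rfl⟩
    rw [Prod.map_fst, Prod.map_snd, id_eq, pushforwardSkewFlow_apply φ hinj t hq]
    exact ⟨_, hΛ.mapsTo t q hq, rfl⟩
  zero := by
    rintro _ ⟨q, hq, rfl⟩
    rw [Prod.map_fst, Prod.map_snd, id_eq, pushforwardSkewFlow_apply φ hinj 0 hq, hΛ.zero q hq]
  add := by
    rintro s t _ ⟨q, hq, rfl⟩
    rw [Prod.map_fst, Prod.map_snd, id_eq, pushforwardSkewFlow_apply φ hinj _ hq,
      pushforwardSkewFlow_apply φ hinj t hq, hΛ.add s t q hq,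
      pushforwardSkewFlow_apply φ hinj s (q := (φ t q.1 q.2, σ t q.2)) (hΛ.mapsTo t q hq)]

end SkewProduct

theorem stmt15_general
    (X : Type*) [NormedAddCommGroup X] [NormedSpace ℝ X]
    (Θ : Type*) [MetricSpace Θ]
    (σ : ℝ → Θ → Θ)
    (H H' : Submodule ℝ X)
    (hcompl : IsCompl H' H)
    (p : X →L[ℝ] X)
    (hp_H' : ∀ x ∈ H', p x = x) (hp_H : ∀ x ∈ H, p x = 0)
    (E : Set (X × Θ)) (hE : IsCompact E)
    (φ : ℝ → X → Θ → X)
    (hφ_cont : ContinuousOn (fun q : ℝ × X × Θ => φ q.1 q.2.1 q.2.2)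
      {q : ℝ × X × Θ | q.2 ∈ E})
    (hinv : ∀ t : ℝ, ∀ q ∈ E, (φ t q.1 q.2, σ t q.2) ∈ E)
    (hφ0 : ∀ q ∈ E, φ 0 q.1 q.2 = q.1)
    (hgrp : ∀ s t : ℝ, ∀ q ∈ E, φ (s + t) q.1 q.2 = φ s (φ t q.1 q.2) (σ t q.2))
    (htrans : ∀ θ : Θ, ∀ x y : X, (x, θ) ∈ E → (y, θ) ∈ E → x ≠ y →
      ∀ t : ℝ, φ t x θ - φ t y θ ∉ H) :
    (∃ e : E ≃ₜ ((fun q : X × Θ => (p q.1, q.2)) '' E),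
      ∀ q : E, (e q : X × Θ) = (p (q : X × Θ).1, (q : X × Θ).2)) ∧
    ∃ ψ : ℝ → X → Θ → X,
      ContinuousOn (fun q : ℝ × X × Θ => ψ q.1 q.2.1 q.2.2)
        {q : ℝ × X × Θ | q.2 ∈ (fun q : X × Θ => (p q.1, q.2)) '' E} ∧
      (∀ t : ℝ, ∀ w ∈ (fun q : X × Θ => (p q.1, q.2)) '' E,
        (ψ t w.1 w.2, σ t w.2) ∈ (fun q : X × Θ => (p q.1, q.2)) '' E) ∧
      (∀ w ∈ (fun q : X × Θ => (p q.1, q.2)) '' E, ψ 0 w.1 w.2 = w.1) ∧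
      (∀ s t : ℝ, ∀ w ∈ (fun q : X × Θ => (p q.1, q.2)) '' E,
        ψ (s + t) w.1 w.2 = ψ s (ψ t w.1 w.2) (σ t w.2)) ∧
      ∀ t : ℝ, ∀ q ∈ E, ψ t (p q.1) q.2 = p (φ t q.1 q.2) := by
  have hker : LinearMap.ker (p : X →ₗ[ℝ] X) = H :=
    LinearMap.ker_eq_of_isCompl hcompl hp_H' hp_H
  have hinj : ∀ θ, InjOn p {x | (x, θ) ∈ E} := by
    intro θ x hx y hy hpxy
    by_contra hne
    have hdiff := htrans θ x y hx hy hne 0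
    rw [hφ0 (x, θ) hx, hφ0 (y, θ) hy, ← hker] at hdiff
    exact hdiff (LinearMap.sub_mem_ker_iff.mpr hpxy)
  have hΛ : IsSkewProductFlow σ φ E := ⟨hφ_cont, hinv, hφ0, hgrp⟩
  obtain ⟨hψ_cont, hψ_maps, hψ_zero, hψ_add⟩ := hΛ.pushforward hE p.continuous hinj
  exact ⟨⟨hE.homeomorphImage (p.continuous.prodMap continuous_id).continuousOn
      (injOn_prodMap_id hinj), hE.coe_homeomorphImage_apply _ _⟩,
    pushforwardSkewFlow p E φ, hψ_cont, hψ_maps, hψ_zero, hψ_add,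
    fun t _ hq => pushforwardSkewFlow_apply φ hinj t hq⟩

/-- If all differences of distinct orbits over the same base point avoid the
d-codimensional subspace 𝓗, then the skew-product flow on the compact invariant
set `E` is topologically conjugate (via the projection `p` onto the
d-dimensional complement 𝓗') to a skew-product flow on a compact subset of
𝓗' × Θ. -/
theorem stmt15
    (X : Type*) [NormedAddCommGroup X] [NormedSpace ℝ X] [CompleteSpace X]
    (Θ : Type*) [MetricSpace Θ] [CompactSpace Θ]
    (σ : ℝ → Θ → Θ)
    (hσ_cont : Continuous fun q : ℝ × Θ => σ q.1 q.2)
    (hσ0 : ∀ θ, σ 0 θ = θ)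
    (hσ_add : ∀ s t θ, σ (s + t) θ = σ s (σ t θ))
    (H H' : Submodule ℝ X) (hH : IsClosed (H : Set X)) (hH' : IsClosed (H' : Set X))
    (d : ℕ) [FiniteDimensional ℝ H'] (hdim : Module.finrank ℝ H' = d)
    (hcompl : IsCompl H' H)
    (p : X →L[ℝ] X) (hp_range : ∀ x, p x ∈ H')
    (hp_H' : ∀ x ∈ H', p x = x) (hp_H : ∀ x ∈ H, p x = 0)
    (E : Set (X × Θ)) (hE : IsCompact E)
    (φ : ℝ → X → Θ → X)
    (hφ_cont : ContinuousOn (fun q : ℝ × X × Θ => φ q.1 q.2.1 q.2.2)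
      {q : ℝ × X × Θ | q.2 ∈ E})
    (hinv : ∀ t : ℝ, ∀ q ∈ E, (φ t q.1 q.2, σ t q.2) ∈ E)
    (hφ0 : ∀ q ∈ E, φ 0 q.1 q.2 = q.1)
    (hgrp : ∀ s t : ℝ, ∀ q ∈ E, φ (s + t) q.1 q.2 = φ s (φ t q.1 q.2) (σ t q.2))
    (htrans : ∀ θ : Θ, ∀ x y : X, (x, θ) ∈ E → (y, θ) ∈ E → x ≠ y →
      ∀ t : ℝ, φ t x θ - φ t y θ ∉ H) :
    (∃ e : E ≃ₜ ((fun q : X × Θ => (p q.1, q.2)) '' E),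
      ∀ q : E, (e q : X × Θ) = (p (q : X × Θ).1, (q : X × Θ).2)) ∧
    ∃ ψ : ℝ → X → Θ → X,
      ContinuousOn (fun q : ℝ × X × Θ => ψ q.1 q.2.1 q.2.2)
        {q : ℝ × X × Θ | q.2 ∈ (fun q : X × Θ => (p q.1, q.2)) '' E} ∧
      (∀ t : ℝ, ∀ w ∈ (fun q : X × Θ => (p q.1, q.2)) '' E,
        (ψ t w.1 w.2, σ t w.2) ∈ (fun q : X × Θ => (p q.1, q.2)) '' E) ∧
      (∀ w ∈ (fun q : X × Θ => (p q.1, q.2)) '' E, ψ 0 w.1 w.2 = w.1) ∧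
      (∀ s t : ℝ, ∀ w ∈ (fun q : X × Θ => (p q.1, q.2)) '' E,
        ψ (s + t) w.1 w.2 = ψ s (ψ t w.1 w.2) (σ t w.2)) ∧
      ∀ t : ℝ, ∀ q ∈ E, ψ t (p q.1) q.2 = p (φ t q.1 q.2) :=
  stmt15_general X Θ σ H H' hcompl p hp_H' hp_H E hE φ hφ_cont hinv hφ0 hgrp htrans
end
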